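/- arXiv:2504.19226 — 10 statements merged into one kernel-verified Lean document; each statement's English description precedes it below -/
import Mathlib

section
/- Closed formula for iterated clockwise Hanany–Witten transitions (interpretation of the supersymmetry inequalities). Fix a separated affine type A bow diagram as above and suppose d(t,s,k) ∈ ℤ is defined for all integers t ≥ 1, s ∈ {0,...,n}, k ∈ {0,...,w} and satisfies the clockwise Hanany–Witten recursions: d(1,s,0) = v_s for all s; d(1,0,k) = v_{-k} for all k; d(1,s,k) = d(1,s,k-1) + d(1,s-1,k) - d(1,s-1,k-1) + 1 for 1 ≤ s ≤ n and 1 ≤ k ≤ w; d(t,s,0) = d(t-1,s,w) and d(t,0,k) = d(t-1,n,k) for t ≥ 2; and d(t,s,k) = s·k + d(t-1,s,w) + d(t-1,n,k) - d(t-1,n,0) for t ≥ 2, 1 ≤ s ≤ n, 1 ≤ k ≤ w. Then for all t ≥ 1, s ∈ {0,...,n} and k ∈ {0,...,w} one has d(t,s,k) = cD^t_{s,k}, i.e. d(t,s,k) = s·k + (t-1)(s·w + k·n) + ((t-1)(t-2)/2)·w·n + v_s + v_{-k} + (t-1)·v_{-w} - t·v_0. (Here d(t,s,k) is the dimension between x-point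 k and arrow s after moving all x-points clockwise through all arrows t-1 times and then moving x-points 1,...,k clockwise through arrows 1,...,s; the anticlockwise statement is the instance of this result for the reflected diagram.) -/
/-! Both `d` and the closed form `cD` satisfy the same recursions with the same initial data.
At `t = 1` the recursion says that the mixed second difference of `d 1` is identically `1`,
which forces `d 1 s k = s k + d 1 s 0 + d 1 0 k - d 1 0 0`. For `t ≥ 2` each value is an explicit
combination of values at `t - 1`, and checking that `cD` obeys the same combination is a ring
identity once the triangular numbers are advanced by `((t+1)-1)((t+1)-2)/2 = (t-1)(t-2)/2 + (t-1)`. -/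

theorem Int.sub_one_mul_sub_two_ediv_two_succ (x : ℤ) :
    (x + 1 - 1) * (x + 1 - 2) / 2 = (x - 1) * (x - 2) / 2 + (x - 1) := by
  rw [show (x + 1 - 1) * (x + 1 - 2) = (x - 1) * (x - 2) + (x - 1) * 2 by ring,
    Int.add_mul_ediv_right _ _ two_ne_zero]

theorem eq_mul_add_of_mixed_diff_eq_one (f : ℕ → ℕ → ℤ) {n w : ℕ}
    (hf : ∀ s < n, ∀ k < w, f (s + 1) (k + 1) = f (s + 1) k + f s (k + 1) - f s k + 1) :
    ∀ s ≤ n, ∀ k ≤ w, f s k = s * k + f s 0 + f 0 k - f 0 0 := by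
  intro s
  induction s with
  | zero => intro _ k _; simp
  | succ s ih =>
    intro hs k
    induction k with
    | zero => intro _; simp
    | succ k ihk =>
      intro hk
      rw [hf s (by omega) k (by omega), ihk (by omega), ih (by omega) (k + 1) hk,
        ih (by omega) k (by omega)]
      push_cast
      ring

def cD (n w : ℕ) (va vx : ℕ → ℤ) (t s k : ℕ) : ℤ :=
  (s : ℤ) * k + ((t : ℤ) - 1) * ((s : ℤ) * w + (k : ℤ) * n)
    + ((t : ℤ) - 1) * ((t : ℤ) - 2) / 2 * w * n
    + va s + vx k + ((t : ℤ) - 1) * vx w - (t : ℤ) * va 0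

section cD

variable {n w : ℕ} {va vx : ℕ → ℤ}

theorem cD_one (s k : ℕ) : cD n w va vx 1 s k = s * k + va s + vx k - va 0 := by
  simp [cD]

theorem cD_succ_zero (hvx0 : vx 0 = va 0) (t s : ℕ) :
    cD n w va vx (t + 1) s 0 = cD n w va vx t s w := by
  unfold cD
  push_cast
  rw [Int.sub_one_mul_sub_two_ediv_two_succ, hvx0]
  ring

theorem cD_succ_zero_left (hvnw : vx w = va n) (t k : ℕ) :
    cD n w va vx (t + 1) 0 k = cD n w va vx t n k := by
  unfold cD
  push_cast
  rw [Int.sub_one_mul_sub_two_ediv_two_succ, hvnw]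
  ring

theorem cD_succ (hvx0 : vx 0 = va 0) (t s k : ℕ) :
    cD n w va vx (t + 1) s k =
      s * k + cD n w va vx t s w + cD n w va vx t n k - cD n w va vx t n 0 := by
  unfold cD
  push_cast
  rw [Int.sub_one_mul_sub_two_ediv_two_succ, hvx0]
  ring

end cD

/-- The diagram is encoded by `va s = v_s` and `vx k = v_{-k}`. -/
theorem hanany_witten_closed_formula_general
    (n w : ℕ)
    (va vx : ℕ → ℤ) (hvx0 : vx 0 = va 0) (hvnw : vx w = va n)
    (d : ℕ → ℕ → ℕ → ℤ)
    (h1s0 : ∀ s ≤ n, d 1 s 0 = va s)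
    (h10k : ∀ k ≤ w, d 1 0 k = vx k)
    (h1sk : ∀ s k : ℕ, 1 ≤ s → s ≤ n → 1 ≤ k → k ≤ w →
      d 1 s k = d 1 s (k - 1) + d 1 (s - 1) k - d 1 (s - 1) (k - 1) + 1)
    (hts0 : ∀ t s : ℕ, 2 ≤ t → s ≤ n → d t s 0 = d (t - 1) s w)
    (ht0k : ∀ t k : ℕ, 2 ≤ t → k ≤ w → d t 0 k = d (t - 1) n k)
    (htsk : ∀ t s k : ℕ, 2 ≤ t → 1 ≤ s → s ≤ n → 1 ≤ k → k ≤ w →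
      d t s k = (s : ℤ) * k + d (t - 1) s w + d (t - 1) n k - d (t - 1) n 0) :
    ∀ t s k : ℕ, 1 ≤ t → s ≤ n → k ≤ w →
      d t s k =
        (s : ℤ) * k + ((t : ℤ) - 1) * ((s : ℤ) * w + (k : ℤ) * n)
          + ((t : ℤ) - 1) * ((t : ℤ) - 2) / 2 * w * n
          + va s + vx k + ((t : ℤ) - 1) * vx w - (t : ℤ) * va 0 := by
  intro t s k ht hs hk
  change d t s k = cD n w va vx t s k
  induction t, ht using Nat.le_induction generalizing s k with
  | base =>
    have hgrid := eq_mul_add_of_mixed_diff_eq_one (d 1) fun s hs k hk =>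
      h1sk (s + 1) (k + 1) (by omega) hs (by omega) hk
    rw [hgrid s hs k hk, h1s0 s hs, h10k k hk, h10k 0 (Nat.zero_le _), hvx0, cD_one]
  | succ t ht ih =>
    have ht2 : 2 ≤ t + 1 := by omega
    obtain rfl | hk0 := Nat.eq_zero_or_pos k
    · rw [hts0 _ s ht2 hs, Nat.add_sub_cancel, ih s w hs le_rfl, cD_succ_zero hvx0]
    obtain rfl | hs0 := Nat.eq_zero_or_pos s
    · rw [ht0k _ k ht2 hk, Nat.add_sub_cancel, ih n k le_rfl hk, cD_succ_zero_left hvnw]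
    rw [htsk _ s k ht2 hs0 hs hk0 hk, Nat.add_sub_cancel, ih s w hs le_rfl, ih n k le_rfl hk,
      ih n 0 le_rfl (Nat.zero_le _), cD_succ hvx0]

/-- **Closed formula for iterated clockwise Hanany–Witten transitions.**
A separated affine type A bow diagram with `n ≥ 1` arrows and `w ≥ 1` x-points is encoded
by `va s = v_s` (`0 ≤ s ≤ n`) and `vx k = v_{-k}` (`0 ≤ k ≤ w`), with `vx 0 = va 0` and
`vx w = va n`.  If `d t s k` satisfies the clockwise Hanany–Witten recursions, then it is
given by the closed formula `cD^t_{s,k}`. -/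
theorem hanany_witten_closed_formula
    (n w : ℕ) (hn : 1 ≤ n) (hw : 1 ≤ w)
    (va vx : ℕ → ℤ) (hvx0 : vx 0 = va 0) (hvnw : vx w = va n)
    (d : ℕ → ℕ → ℕ → ℤ)
    (h1s0 : ∀ s ≤ n, d 1 s 0 = va s)
    (h10k : ∀ k ≤ w, d 1 0 k = vx k)
    (h1sk : ∀ s k : ℕ, 1 ≤ s → s ≤ n → 1 ≤ k → k ≤ w →
      d 1 s k = d 1 s (k - 1) + d 1 (s - 1) k - d 1 (s - 1) (k - 1) + 1)
    (hts0 : ∀ t s : ℕ, 2 ≤ t → s ≤ n → d t s 0 = d (t - 1) s w)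
    (ht0k : ∀ t k : ℕ, 2 ≤ t → k ≤ w → d t 0 k = d (t - 1) n k)
    (htsk : ∀ t s k : ℕ, 2 ≤ t → 1 ≤ s → s ≤ n → 1 ≤ k → k ≤ w →
      d t s k = (s : ℤ) * k + d (t - 1) s w + d (t - 1) n k - d (t - 1) n 0) :
    ∀ t s k : ℕ, 1 ≤ t → s ≤ n → k ≤ w →
      d t s k =
        (s : ℤ) * k + ((t : ℤ) - 1) * ((s : ℤ) * w + (k : ℤ) * n)
          + ((t : ℤ) - 1) * ((t : ℤ) - 2) / 2 * w * n
          + va s + vx k + ((t : ℤ) - 1) * vx w - (t : ℤ) * va 0 :=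
  hanany_witten_closed_formula_general n w va vx hvx0 hvnw d h1s0 h10k h1sk hts0 ht0k htsk
end

section
/- Subtracting a constant from all dimensions adjacent to arrows preserves the supersymmetry inequalities. Let a separated affine type A bow diagram as above satisfy the supersymmetry inequalities and assume w > v_0 − v_n ≥ 0. Let a be an integer with a ≤ v_s for every s ∈ {1,...,n}. Then the modified dimension vector v' defined by v'_s = v_s − a for s ∈ {0,...,n}, v'_{-k} = v_{-k} for k ∈ {1,...,w−1}, v'_{-0} = v_0 − a and v'_{-w} = v_n − a (the bow subdiagram obtained by subtracting a from every dimension adjacent to an arrow) again satisfies the supersymmetry inequalities, i.e. all quantities cD^t_{s,k} and aD^t_{n+1-s,w+1-k} formed from v' are ≥ 0 for all t ≥ 1, s ∈ {0,...,n}, k ∈ {0,...,w}. -/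
/-!
The constant `a` enters `cD^t_{s,k}` and `aD^t_{n+1-s,w+1-k}` with total coefficient
`-1 - (t - 1) + t = 0` when `0 < k < w`, so those inequalities are unchanged. For `k = 0`
(with `T = t - 1`) and for `k = w` (with `T = t`), writing `d = v_0 - v_n`, the modified
quantities become `T s w + C(T, 2) w n + v_s - T d - a` and
`T s w + C(T, 2) w n + v_{n-s} + T d - a`. Both are nonnegative: `a ≤ v_s` for every `s ≤ n`
(at `s = 0` because `v_0 ≥ v_n`), `T d ≤ T w ≤ T s w` when `s ≥ 1`, and at `s = 0` the
deficit `(T - 1) d` is absorbed by `C(T, 2) w n` since `T - 1 ≤ C(T, 2)` and `d < w`.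
-/

/-- The supersymmetry inequalities for a separated affine type A bow diagram with `n` arrows
and `w` x-points, dimension vector `va s = v_s` (`0 ≤ s ≤ n`), `vx k = v_{-k}` (`0 ≤ k ≤ w`):
`cD^t_{s,k} ≥ 0` and `aD^t_{n+1-s,w+1-k} ≥ 0` for all `t ≥ 1`, `0 ≤ s ≤ n`, `0 ≤ k ≤ w`. -/
def SatisfiesSusyIneq (n w : ℕ) (va vx : ℕ → ℤ) : Prop :=
  ∀ t s k : ℕ, 1 ≤ t → s ≤ n → k ≤ w →
    (0 ≤ (s : ℤ) * k + ((t : ℤ) - 1) * ((s : ℤ) * w + (k : ℤ) * n)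
        + ((t : ℤ) - 1) * ((t : ℤ) - 2) / 2 * w * n
        + va s + vx k + ((t : ℤ) - 1) * vx w - (t : ℤ) * va 0) ∧
    (0 ≤ (s : ℤ) * k + ((t : ℤ) - 1) * ((s : ℤ) * w + (k : ℤ) * n)
        + ((t : ℤ) - 1) * ((t : ℤ) - 2) / 2 * w * n
        + va (n - s) + vx (w - k) + ((t : ℤ) - 1) * va 0 - (t : ℤ) * vx w)

theorem Nat.choose_two_succ (T : ℕ) : (T + 1).choose 2 = T.choose 2 + T := by
  rw [Nat.choose_succ_succ', Nat.choose_one_right, add_comm]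

theorem Nat.sub_one_le_choose_two (T : ℕ) : T - 1 ≤ T.choose 2 := by
  cases T with
  | zero => simp
  | succ T => rw [Nat.choose_two_succ]; omega

theorem Int.choose_two_mul_two (T : ℕ) : (T.choose 2 : ℤ) * 2 = T * (T - 1) := by
  have h : ((T.choose 2 : ℤ) : ℚ) * 2 = ((T * (T - 1) : ℤ) : ℚ) := by
    push_cast
    rw [Nat.cast_choose_two]
    ring
  exact_mod_cast h

theorem Int.succ_sub_one_mul_succ_sub_two_div_two (T : ℕ) :
    (((T + 1 : ℕ) : ℤ) - 1) * (((T + 1 : ℕ) : ℤ) - 2) / 2 = T.choose 2 := by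
  refine Int.ediv_eq_of_eq_mul_left two_ne_zero ?_
  rw [Int.choose_two_mul_two]
  push_cast
  ring

section ArrowBound

variable {n w : ℕ} {va : ℕ → ℤ} {a : ℤ}

theorem le_arrow_dim (hn : 1 ≤ n) (hd0 : 0 ≤ va 0 - va n)
    (ha : ∀ s : ℕ, 1 ≤ s → s ≤ n → a ≤ va s) {s : ℕ} (hs : s ≤ n) : a ≤ va s := by
  rcases s.eq_zero_or_pos with rfl | hs1
  · linarith [ha n hn le_rfl]
  · exact ha s hs1 hs

theorem le_arrow_dim_add_drop (hn : 1 ≤ n) (hd0 : 0 ≤ va 0 - va n)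
    (ha : ∀ s : ℕ, 1 ≤ s → s ≤ n → a ≤ va s) (T s : ℕ) :
    a ≤ T * s * w + T.choose 2 * w * n + va (n - s) + T * (va 0 - va n) := by
  have hva : a ≤ va (n - s) := le_arrow_dim hn hd0 ha (Nat.sub_le n s)
  have hT : (0 : ℤ) ≤ T * (va 0 - va n) := mul_nonneg (by positivity) hd0
  have hsw : (0 : ℤ) ≤ T * s * w := by positivity
  have hwn : (0 : ℤ) ≤ T.choose 2 * w * n := by positivity
  linarith

theorem add_drop_le_arrow_dim (hn : 1 ≤ n) (hd0 : 0 ≤ va 0 - va n) (hdw : va 0 - va n < w)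
    (ha : ∀ s : ℕ, 1 ≤ s → s ≤ n → a ≤ va s) (T : ℕ) {s : ℕ} (hs : s ≤ n) :
    a + T * (va 0 - va n) ≤ T * s * w + T.choose 2 * w * n + va s := by
  have hT : (0 : ℤ) ≤ T := by positivity
  rcases s.eq_zero_or_pos with rfl | hs1
  · have han : a ≤ va n := ha n hn le_rfl
    have hchoose : (T : ℤ) - 1 ≤ T.choose 2 := by
      have := Nat.sub_one_le_choose_two T
      omega
    have hn1 : (1 : ℤ) ≤ n := by exact_mod_cast hn
    calc a + T * (va 0 - va n)
        = a + (va 0 - va n) + ((T : ℤ) - 1) * (va 0 - va n) := by ring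
      _ ≤ va 0 + T.choose 2 * w * 1 := by
          have h1 : ((T : ℤ) - 1) * (va 0 - va n) ≤ T.choose 2 * (va 0 - va n) :=
            mul_le_mul_of_nonneg_right hchoose hd0
          have h2 : (T.choose 2 : ℤ) * (va 0 - va n) ≤ T.choose 2 * w :=
            mul_le_mul_of_nonneg_left hdw.le (by positivity)
          linarith
      _ ≤ va 0 + T.choose 2 * w * n := by gcongr
      _ = T * (0 : ℕ) * w + T.choose 2 * w * n + va 0 := by push_cast; ring
  · have hs1' : (1 : ℤ) ≤ s := by exact_mod_cast hs1
    have hdrop : (T : ℤ) * (va 0 - va n) ≤ T * s * w := by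
      rw [mul_assoc]
      exact mul_le_mul_of_nonneg_left (by nlinarith) hT
    have hwn : (0 : ℤ) ≤ T.choose 2 * w * n := by positivity
    linarith [ha s hs1 hs]

end ArrowBound

theorem subtract_arrow_dims_preserves_susy_ineq_general
    (n w : ℕ) (hn : 1 ≤ n)
    (va vx : ℕ → ℤ) (hvnw : vx w = va n)
    (hsusy : SatisfiesSusyIneq n w va vx)
    (hd0 : 0 ≤ va 0 - va n) (hdw : va 0 - va n < w)
    (a : ℤ) (ha : ∀ s : ℕ, 1 ≤ s → s ≤ n → a ≤ va s)
    (va' vx' : ℕ → ℤ)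
    (hva' : ∀ s ≤ n, va' s = va s - a)
    (hvx'0 : vx' 0 = va 0 - a)
    (hvx'mid : ∀ k : ℕ, 1 ≤ k → k < w → vx' k = vx k)
    (hvx'w : vx' w = va n - a) :
    SatisfiesSusyIneq n w va' vx' := by
  intro t s k ht hs hk
  obtain ⟨T, rfl⟩ : ∃ T, t = T + 1 := ⟨t - 1, by omega⟩
  rw [Int.succ_sub_one_mul_succ_sub_two_div_two, hva' s hs, hva' 0 n.zero_le,
    hva' (n - s) (Nat.sub_le n s), hvx'w]
  have hcD := add_drop_le_arrow_dim hn hd0 hdw ha T hs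
  have haD := le_arrow_dim_add_drop (w := w) hn hd0 ha T s
  have hcD' := add_drop_le_arrow_dim hn hd0 hdw ha (T + 1) hs
  have haD' := le_arrow_dim_add_drop (w := w) hn hd0 ha (T + 1) s
  rw [Nat.choose_two_succ] at hcD' haD'
  rcases k.eq_zero_or_pos with rfl | hk1
  · rw [hvx'0, Nat.sub_zero, hvx'w]
    push_cast at *
    constructor <;> linarith
  rcases hk.lt_or_eq with hkw | rfl
  · have h := hsusy (T + 1) s k (by omega) hs hk
    rw [Int.succ_sub_one_mul_succ_sub_two_div_two, hvnw] at h
    rw [hvx'mid k hk1 hkw, hvx'mid (w - k) (by omega) (by omega)]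
    push_cast at *
    constructor <;> linarith [h.1, h.2]
  · rw [hvx'w, Nat.sub_self, hvx'0]
    push_cast at *
    constructor <;> linarith

/-- **Subtracting a constant from all dimensions adjacent to arrows preserves the
supersymmetry inequalities.**  Assume the diagram satisfies the supersymmetry inequalities,
`w > v_0 - v_n ≥ 0`, and `a ≤ v_s` for all `1 ≤ s ≤ n`.  Then the modified dimension vector
`v'_s = v_s - a` (`0 ≤ s ≤ n`), `v'_{-k} = v_{-k}` (`1 ≤ k ≤ w-1`), `v'_{-0} = v_0 - a`,
`v'_{-w} = v_n - a`, again satisfies the supersymmetry inequalities. -/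
theorem subtract_arrow_dims_preserves_susy_ineq
    (n w : ℕ) (hn : 1 ≤ n) (hw : 1 ≤ w)
    (va vx : ℕ → ℤ) (hvx0 : vx 0 = va 0) (hvnw : vx w = va n)
    (hsusy : SatisfiesSusyIneq n w va vx)
    (hd0 : 0 ≤ va 0 - va n) (hdw : va 0 - va n < w)
    (a : ℤ) (ha : ∀ s : ℕ, 1 ≤ s → s ≤ n → a ≤ va s)
    (va' vx' : ℕ → ℤ)
    (hva' : ∀ s ≤ n, va' s = va s - a)
    (hvx'0 : vx' 0 = va 0 - a)
    (hvx'mid : ∀ k : ℕ, 1 ≤ k → k < w → vx' k = vx k)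
    (hvx'w : vx' w = va n - a) :
    SatisfiesSusyIneq n w va' vx' :=
  subtract_arrow_dims_preserves_susy_ineq_general n w hn va vx hvnw hsusy hd0 hdw a ha va' vx' hva'
    hvx'0 hvx'mid hvx'w
end

section
/- Finite type A bow diagrams satisfying the supersymmetry inequalities are supersymmetric. Consider a separated finite type A bow diagram as above (so v_n = 0, u_w = 0, u_0 = v_0). If s·k + v_s + u_k − v_0 ≥ 0 for every s ∈ {0,...,n} and k ∈ {0,...,w} (the supersymmetry inequalities for t = 1), then there exists a supersymmetric brane diagram giving rise to it, i.e. there exist F, P, Q as above realizing all the segment dimensions. -/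
/-- Telescoping sum over an `Icc`. -/
lemma bow_tele (R : ℕ → ℤ) (j : ℕ) : ∀ n, j ≤ n →
    ∑ s ∈ Finset.Icc (j+1) n, (R (s-1) - R s) = R j - R n := by
  intro n
  induction n with
  | zero => intro h; interval_cases j; simp
  | succ m ih =>
    intro h
    rcases Nat.eq_or_lt_of_le h with h1 | h2
    · rw [← h1]; rw [Finset.Icc_eq_empty (by omega)]; simp
    · have hjm : j ≤ m := by omega
      rw [Finset.sum_Icc_succ_top (by omega : j+1 ≤ m+1), ih hjm]
      have : m + 1 - 1 = m := rfl
      rw [this]; ring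

/-- Counting integers in an interval below a bound. -/
lemma bow_count (a b : ℕ) (x : ℤ) (hx : 0 ≤ x) (hxb : x ≤ (b:ℤ)) :
    ∑ k ∈ Finset.Icc (a+1) b, (if (k:ℤ) ≤ x then (1:ℤ) else 0) = max (x - a) 0 := by
  rw [Finset.sum_boole]
  have h2 : (Finset.Icc (a+1) b).filter (fun k : ℕ => (k:ℤ) ≤ x) = Finset.Icc (a+1) x.toNat := by
    ext k
    simp only [Finset.mem_filter, Finset.mem_Icc]
    omega
  rw [h2, Nat.card_Icc]
  rcases le_total (x - a) 0 with h | h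
  · rw [max_eq_right h]; omega
  · rw [max_eq_left h]; omega

/-- Sum of positive parts of an eventually-nonincreasing sequence is bounded by
the bound on prefix sums. -/
lemma bow_posparts (δ : ℕ → ℤ) (B : ℤ) (hB : 0 ≤ B)
    (hstep : ∀ s, 1 ≤ s → δ (s+1) ≤ δ s) :
    ∀ n, (∀ m, m ≤ n → ∑ s ∈ Finset.Icc 1 m, δ s ≤ B) →
    ∑ s ∈ Finset.Icc 1 n, max (δ s) 0 ≤ B := by
  have hanti : ∀ s t, 1 ≤ s → s ≤ t → δ t ≤ δ s := by
    intro s t h1 hst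
    induction t, hst using Nat.le_induction with
    | base => exact le_refl _
    | succ t ht ih => exact le_trans (hstep t (by omega)) ih
  intro n
  induction n with
  | zero => intro _; simpa using hB
  | succ m ih =>
    intro hpre
    rcases le_or_gt (δ (m+1)) 0 with h | h
    · rw [Finset.sum_Icc_succ_top (by omega : 1 ≤ m+1), max_eq_right h, add_zero]
      exact ih (fun m' hm' => hpre m' (by omega))
    · have hall : ∀ s ∈ Finset.Icc 1 (m+1), max (δ s) 0 = δ s := by
        intro s hs
        simp only [Finset.mem_Icc] at hs
        exact max_eq_left (le_of_lt (lt_of_lt_of_le h (hanti s (m+1) hs.1 hs.2)))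
      rw [Finset.sum_congr rfl hall]
      exact hpre (m+1) le_rfl


/-- **Finite type A bow diagrams satisfying the supersymmetry inequalities are
supersymmetric.**  A separated finite type A bow diagram is given by segment dimensions
`v n = 0, v (n-1), ..., v 1, v 0` (arrow side) and `u 0 = v 0, u 1, ..., u (w-1), u w = 0`
(x-point side).  If `s·k + v_s + u_k - v_0 ≥ 0` for all `0 ≤ s ≤ n`, `0 ≤ k ≤ w`, then
there exists a supersymmetric brane diagram giving rise to it: a `{0,1}`-matrix `F`
recording fixed D3-branes joining `○_s` to `x_k`, and multiplicities `P s s'`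
(`n ≥ s > s' ≥ 1`) and `Q k k'` (`1 ≤ k < k' ≤ w`) of unfixed D3-branes, realizing all
segment dimensions. -/
theorem finite_susy_ineq_implies_supersymmetric
    (n w : ℕ) (hn : 1 ≤ n) (hw : 1 ≤ w)
    (v u : ℕ → ℤ) (hvn : v n = 0) (hu0 : u 0 = v 0) (huw : u w = 0)
    (hineq : ∀ s k : ℕ, s ≤ n → k ≤ w → 0 ≤ (s : ℤ) * k + v s + u k - v 0) :
    ∃ F P Q : ℕ → ℕ → ℕ,
      (∀ s k : ℕ, 1 ≤ s → s ≤ n → 1 ≤ k → k ≤ w → F s k ≤ 1) ∧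
      (∀ j : ℕ, 1 ≤ j → j < n →
        v j = (((∑ s ∈ Finset.Icc (j + 1) n, ∑ s' ∈ Finset.Icc 1 j, P s s')
          + ∑ s ∈ Finset.Icc (j + 1) n, ∑ k ∈ Finset.Icc 1 w, F s k : ℕ) : ℤ)) ∧
      (v 0 = ((∑ s ∈ Finset.Icc 1 n, ∑ k ∈ Finset.Icc 1 w, F s k : ℕ) : ℤ)) ∧
      (∀ j : ℕ, 1 ≤ j → j < w →
        u j = (((∑ s ∈ Finset.Icc 1 n, ∑ k ∈ Finset.Icc (j + 1) w, F s k)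
          + ∑ k ∈ Finset.Icc 1 j, ∑ k' ∈ Finset.Icc (j + 1) w, Q k k' : ℕ) : ℤ)) := by
  classical
  have hne : (Finset.Icc 0 w).Nonempty := ⟨0, by simp⟩
  set R : ℕ → ℤ := fun s => (Finset.Icc 0 w).sup' hne (fun k => v 0 - u k - (s:ℤ) * k) with hRdef
  have hle_sup : ∀ (s k : ℕ), k ≤ w → v 0 - u k - (s:ℤ)*k ≤ R s := by
    intro s k hk
    rw [hRdef]
    exact Finset.le_sup' (fun k => v 0 - u k - (s:ℤ) * k) (Finset.mem_Icc.mpr ⟨Nat.zero_le _, hk⟩)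
  have hsup_le : ∀ (s : ℕ) (a : ℤ), (∀ k, k ≤ w → v 0 - u k - (s:ℤ)*k ≤ a) → R s ≤ a := by
    intro s a h
    rw [hRdef]
    exact Finset.sup'_le _ _ (fun k hk => h k (Finset.mem_Icc.mp hk).2)
  have hu_nonneg : ∀ k, k ≤ w → 0 ≤ u k := by
    intro k hk
    have := hineq 0 k (by omega) hk
    push_cast at this; linarith
  have hR_le_v : ∀ s, s ≤ n → R s ≤ v s := by
    intro s hs
    exact hsup_le s _ (fun k hk => by have := hineq s k hs hk; linarith)
  have hR0 : R 0 = v 0 := by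
    apply le_antisymm
    · apply hsup_le 0 _
      intro k hk
      have := hu_nonneg k hk
      push_cast; linarith
    · have := hle_sup 0 w le_rfl
      rw [huw] at this; push_cast at this; linarith
  have hRn : R n = 0 := by
    apply le_antisymm
    · apply hsup_le n _
      intro k hk
      have := hineq n k le_rfl hk
      rw [hvn] at this; linarith
    · have := hle_sup n 0 (by omega)
      rw [hu0] at this; push_cast at this; linarith
  have hRmono : ∀ s : ℕ, R (s+1) ≤ R s := by
    intro s
    refine hsup_le (s+1) (R s) (fun k hk => ?_)
    have h0 : (0:ℤ) ≤ (k:ℤ) := Int.natCast_nonneg k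
    have h1 := hle_sup s k hk
    push_cast
    nlinarith
  have hRstep : ∀ s : ℕ, R s ≤ R (s+1) + w := by
    intro s
    refine hsup_le s (R (s+1) + w) (fun k hk => ?_)
    have hkw : (k:ℤ) ≤ w := by exact_mod_cast hk
    have h1 := hle_sup (s+1) k hk
    push_cast at h1 ⊢
    nlinarith
  have hRconv : ∀ s : ℕ, 2 * R (s+1) ≤ R s + R (s+2) := by
    intro s
    obtain ⟨k, hk, hEq⟩ := Finset.exists_mem_eq_sup' hne (fun k => v 0 - u k - ((s+1:ℕ):ℤ) * k)
    have hkw : k ≤ w := (Finset.mem_Icc.mp hk).2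
    have h1 := hle_sup s k hkw
    have h2 := hle_sup (s+2) k hkw
    have hEq' : R (s+1) = v 0 - u k - ((s+1:ℕ):ℤ) * k := hEq
    push_cast at h1 h2 hEq' ⊢
    nlinarith
  -- basic bounds on the decrements
  have hr0 : ∀ s : ℕ, 1 ≤ s → 0 ≤ R (s-1) - R s := by
    intro s hs
    have := hRmono (s-1)
    have e1 : s - 1 + 1 = s := by omega
    rw [e1] at this
    linarith
  have hrw : ∀ s : ℕ, 1 ≤ s → R (s-1) - R s ≤ (w:ℤ) := by
    intro s hs
    have := hRstep (s-1)
    have e1 : s - 1 + 1 = s := by omega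
    rw [e1] at this
    linarith
  set Tf : ℕ → ℤ := fun j => ∑ s ∈ Finset.Icc 1 n, max (R (s-1) - R s - (j:ℤ)) 0 with hTfdef
  have hT_le_u : ∀ j : ℕ, j ≤ w → Tf j ≤ u j := by
    intro j hj
    apply bow_posparts (fun s => R (s-1) - R s - (j:ℤ)) (u j) (hu_nonneg j hj)
    · intro s hs
      have h := hRconv (s-1)
      have e1 : s - 1 + 1 = s := by omega
      have e2 : s - 1 + 2 = s + 1 := by omega
      rw [e1, e2] at h
      have e3 : s + 1 - 1 = s := rfl
      rw [e3]
      linarith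
    · intro m hm
      have ht := bow_tele R 0 m (Nat.zero_le m)
      have hsum : ∑ s ∈ Finset.Icc 1 m, (R (s-1) - R s - (j:ℤ))
          = (∑ s ∈ Finset.Icc 1 m, (R (s-1) - R s)) - (m:ℤ) * j := by
        rw [Finset.sum_sub_distrib, Finset.sum_const, Nat.card_Icc]
        simp only [nsmul_eq_mul]
        push_cast
        ring
      rw [hsum, ht, hR0]
      have := hle_sup m j hj
      linarith
  -- row sums of F
  have hrow : ∀ s : ℕ, 1 ≤ s →
      ∑ k ∈ Finset.Icc 1 w, (if (k:ℤ) ≤ R (s-1) - R s then (1:ℤ) else 0) = R (s-1) - R s := by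
    intro s hs
    have h := bow_count 0 w (R (s-1) - R s) (hr0 s hs) (hrw s hs)
    have e : max (R (s-1) - R s - ((0:ℕ):ℤ)) 0 = R (s-1) - R s := by
      push_cast
      rw [sub_zero]
      exact max_eq_left (hr0 s hs)
    rw [e] at h
    exact h
  have hcol : ∀ (j s : ℕ), 1 ≤ s →
      ∑ k ∈ Finset.Icc (j+1) w, (if (k:ℤ) ≤ R (s-1) - R s then (1:ℤ) else 0)
        = max (R (s-1) - R s - (j:ℤ)) 0 := by
    intro j s hs
    exact bow_count j w (R (s-1) - R s) (hr0 s hs) (hrw s hs)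
  refine ⟨fun s k => if (k:ℤ) ≤ R (s-1) - R s then 1 else 0,
          fun a b => if a = b + 1 ∧ 1 ≤ b ∧ b < n then (v b - R b).toNat else 0,
          fun a b => if b = a + 1 ∧ 1 ≤ a ∧ a < w then (u a - Tf a).toNat else 0,
          ?_, ?_, ?_, ?_⟩
  · intro s k _ _ _ _
    simp only
    split_ifs <;> omega
  · -- arrow-side segments
    intro j hj1 hjn
    have hA : ((∑ s ∈ Finset.Icc (j + 1) n, ∑ s' ∈ Finset.Icc 1 j,
        (if s = s' + 1 ∧ 1 ≤ s' ∧ s' < n then (v s' - R s').toNat else 0) : ℕ) : ℤ)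
        = v j - R j := by
      rw [Finset.sum_eq_single_of_mem (j+1) (Finset.mem_Icc.mpr ⟨le_refl _, by omega⟩)
        (by
          intro s hs hne'
          apply Finset.sum_eq_zero
          intro s' hs'
          simp only [Finset.mem_Icc] at hs hs'
          rw [if_neg]
          omega)]
      rw [Finset.sum_eq_single_of_mem j (Finset.mem_Icc.mpr ⟨hj1, le_refl _⟩)
        (by
          intro s' hs' hne'
          simp only [Finset.mem_Icc] at hs'
          rw [if_neg]
          omega)]
      rw [if_pos ⟨rfl, hj1, hjn⟩]
      exact Int.toNat_of_nonneg (by have := hR_le_v j (by omega); linarith)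
    have hB : ((∑ s ∈ Finset.Icc (j + 1) n, ∑ k ∈ Finset.Icc 1 w,
        (if (k:ℤ) ≤ R (s-1) - R s then 1 else 0) : ℕ) : ℤ) = R j := by
      push_cast
      have : ∀ s ∈ Finset.Icc (j+1) n,
          ∑ k ∈ Finset.Icc 1 w, (if (k:ℤ) ≤ R (s-1) - R s then (1:ℤ) else 0)
            = R (s-1) - R s := by
        intro s hs
        exact hrow s (by simp only [Finset.mem_Icc] at hs; omega)
      rw [Finset.sum_congr rfl this, bow_tele R j n (by omega), hRn]
      ring
    beta_reduce
    rw [Nat.cast_add, hA, hB]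
    ring
  · -- v 0
    have hB : ((∑ s ∈ Finset.Icc 1 n, ∑ k ∈ Finset.Icc 1 w,
        (if (k:ℤ) ≤ R (s-1) - R s then 1 else 0) : ℕ) : ℤ) = R 0 - R n := by
      push_cast
      have : ∀ s ∈ Finset.Icc 1 n,
          ∑ k ∈ Finset.Icc 1 w, (if (k:ℤ) ≤ R (s-1) - R s then (1:ℤ) else 0)
            = R (s-1) - R s := by
        intro s hs
        exact hrow s (by simp only [Finset.mem_Icc] at hs; omega)
      rw [Finset.sum_congr rfl this]
      exact bow_tele R 0 n (Nat.zero_le n)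
    beta_reduce
    rw [hB, hR0, hRn]
    ring
  · -- x-point side segments
    intro j hj1 hjw
    have hB : ((∑ s ∈ Finset.Icc 1 n, ∑ k ∈ Finset.Icc (j + 1) w,
        (if (k:ℤ) ≤ R (s-1) - R s then 1 else 0) : ℕ) : ℤ) = Tf j := by
      push_cast
      have : ∀ s ∈ Finset.Icc 1 n,
          ∑ k ∈ Finset.Icc (j+1) w, (if (k:ℤ) ≤ R (s-1) - R s then (1:ℤ) else 0)
            = max (R (s-1) - R s - (j:ℤ)) 0 := by
        intro s hs
        exact hcol j s (by simp only [Finset.mem_Icc] at hs; omega)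
      rw [Finset.sum_congr rfl this]
    have hC : ((∑ k ∈ Finset.Icc 1 j, ∑ k' ∈ Finset.Icc (j + 1) w,
        (if k' = k + 1 ∧ 1 ≤ k ∧ k < w then (u k - Tf k).toNat else 0) : ℕ) : ℤ)
        = u j - Tf j := by
      rw [Finset.sum_eq_single_of_mem j (Finset.mem_Icc.mpr ⟨hj1, le_refl _⟩)
        (by
          intro k hk hne'
          apply Finset.sum_eq_zero
          intro k' hk'
          simp only [Finset.mem_Icc] at hk hk'
          rw [if_neg]
          omega)]
      rw [Finset.sum_eq_single_of_mem (j+1) (Finset.mem_Icc.mpr ⟨le_refl _, by omega⟩)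
        (by
          intro k' hk' hne'
          simp only [Finset.mem_Icc] at hk'
          rw [if_neg]
          omega)]
      rw [if_pos ⟨rfl, hj1, hjw⟩]
      exact Int.toNat_of_nonneg (by have := hT_le_u j (by omega); linarith)
    beta_reduce
    rw [Nat.cast_add, hB, hC]
    ring
end

section
/- Main theorem, implication (e)⇒(d) in finite type A: if a separated finite type A bow diagram as above admits a supersymmetric brane diagram giving rise to it (i.e. there exist F, P, Q as above realizing all segment dimensions), then s·k + v_s + u_k − v_0 ≥ 0 for every s ∈ {0,...,n} and k ∈ {0,...,w}. -/
/-!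
Sort the fixed D3-branes by the block of the grid `{○_1, …, ○_n} × {x_1, …, x_w}` they join.
The segment `v_s` is crossed by every fixed brane leaving some `○_{s'}` with `s' > s`, and `u_k`
by every fixed brane arriving at some `x_{k'}` with `k' > k`, while `v_0` counts all fixed
branes. The ones counted by neither `v_s` nor `u_k` join `○_{s'}` to `x_{k'}` with `s' ≤ s`,
`k' ≤ k`, and supersymmetry allows at most one per pair, hence at most `s·k` of them.
-/

open Finset

theorem Nat.Icc_one_eq_Ioc_zero (b : ℕ) : Icc 1 b = Ioc 0 b := Icc_add_one_left_eq_Ioc 0 b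

namespace BraneDiagram

def blockSum (F : ℕ → ℕ → ℕ) (a b c d : ℕ) : ℕ :=
  ∑ s ∈ Ioc a b, ∑ k ∈ Ioc c d, F s k

variable {F : ℕ → ℕ → ℕ}

theorem blockSum_le_mul {a b c d : ℕ} (hF : ∀ s ∈ Ioc a b, ∀ k ∈ Ioc c d, F s k ≤ 1) :
    blockSum F a b c d ≤ (b - a) * (d - c) := by
  calc blockSum F a b c d ≤ ∑ _s ∈ Ioc a b, ∑ _k ∈ Ioc c d, 1 :=
        sum_le_sum fun s hs => sum_le_sum fun k hk => hF s hs k hk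
    _ = (b - a) * (d - c) := by simp

theorem blockSum_add_blockSum_rows {a b m c d : ℕ} (hab : a ≤ b) (hbm : b ≤ m) :
    blockSum F a b c d + blockSum F b m c d = blockSum F a m c d :=
  sum_Ioc_consecutive _ hab hbm

theorem blockSum_add_blockSum_cols {a b c d e : ℕ} (hcd : c ≤ d) (hde : d ≤ e) :
    blockSum F a b c d + blockSum F a b d e = blockSum F a b c e := by
  simp only [blockSum, ← sum_add_distrib, sum_Ioc_consecutive _ hcd hde]

theorem blockSum_le_mul_add {n w s k : ℕ} (hs : s ≤ n) (hk : k ≤ w)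
    (hF : ∀ s' ∈ Ioc 0 s, ∀ k' ∈ Ioc 0 k, F s' k' ≤ 1) :
    blockSum F 0 n 0 w ≤ s * k + blockSum F 0 n k w + blockSum F s n 0 w := by
  have hcorner := blockSum_le_mul hF
  have hrows := blockSum_add_blockSum_rows (F := F) (c := 0) (d := w) (Nat.zero_le s) hs
  have hcols := blockSum_add_blockSum_cols (F := F) (a := 0) (b := s) (Nat.zero_le k) hk
  have htail := blockSum_add_blockSum_rows (F := F) (c := k) (d := w) (Nat.zero_le s) hs
  simp only [Nat.sub_zero] at hcorner
  omega

theorem blockSum_le_v {n w : ℕ} {v : ℕ → ℤ} {P : ℕ → ℕ → ℕ} (hvn : v n = 0)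
    (hv : ∀ j : ℕ, 1 ≤ j → j < n →
      v j = (((∑ s ∈ Icc (j + 1) n, ∑ s' ∈ Icc 1 j, P s s')
        + ∑ s ∈ Icc (j + 1) n, ∑ k ∈ Icc 1 w, F s k : ℕ) : ℤ))
    (hv0 : v 0 = ((∑ s ∈ Icc 1 n, ∑ k ∈ Icc 1 w, F s k : ℕ) : ℤ))
    {s : ℕ} (hs : s ≤ n) : (blockSum F s n 0 w : ℤ) ≤ v s := by
  rcases hs.eq_or_lt with rfl | hsn
  · simp [blockSum, hvn]
  rcases Nat.eq_zero_or_pos s with rfl | hs0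
  · simp [blockSum, hv0, Nat.Icc_one_eq_Ioc_zero]
  rw [hv s hs0 hsn, Icc_add_one_left_eq_Ioc, Nat.Icc_one_eq_Ioc_zero]
  exact_mod_cast Nat.le_add_left _ _

theorem blockSum_le_u {n w : ℕ} {v u : ℕ → ℤ} {Q : ℕ → ℕ → ℕ}
    (hu0 : u 0 = v 0) (huw : u w = 0)
    (hv0 : v 0 = ((∑ s ∈ Icc 1 n, ∑ k ∈ Icc 1 w, F s k : ℕ) : ℤ))
    (hu : ∀ j : ℕ, 1 ≤ j → j < w →
      u j = (((∑ s ∈ Icc 1 n, ∑ k ∈ Icc (j + 1) w, F s k)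
        + ∑ k ∈ Icc 1 j, ∑ k' ∈ Icc (j + 1) w, Q k k' : ℕ) : ℤ))
    {k : ℕ} (hk : k ≤ w) : (blockSum F 0 n k w : ℤ) ≤ u k := by
  rcases hk.eq_or_lt with rfl | hkw
  · simp [blockSum, huw]
  rcases Nat.eq_zero_or_pos k with rfl | hk0
  · simp [blockSum, hu0, hv0, Nat.Icc_one_eq_Ioc_zero]
  rw [hu k hk0 hkw, Icc_add_one_left_eq_Ioc, Nat.Icc_one_eq_Ioc_zero]
  exact_mod_cast Nat.le_add_right _ _

end BraneDiagram

open BraneDiagram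

theorem finite_supersymmetric_implies_susy_ineq_general
    (n w : ℕ)
    (v u : ℕ → ℤ) (hvn : v n = 0) (hu0 : u 0 = v 0) (huw : u w = 0)
    (F P Q : ℕ → ℕ → ℕ)
    (hF : ∀ s k : ℕ, 1 ≤ s → s ≤ n → 1 ≤ k → k ≤ w → F s k ≤ 1)
    (hv : ∀ j : ℕ, 1 ≤ j → j < n →
      v j = (((∑ s ∈ Finset.Icc (j + 1) n, ∑ s' ∈ Finset.Icc 1 j, P s s')
        + ∑ s ∈ Finset.Icc (j + 1) n, ∑ k ∈ Finset.Icc 1 w, F s k : ℕ) : ℤ))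
    (hv0 : v 0 = ((∑ s ∈ Finset.Icc 1 n, ∑ k ∈ Finset.Icc 1 w, F s k : ℕ) : ℤ))
    (hu : ∀ j : ℕ, 1 ≤ j → j < w →
      u j = (((∑ s ∈ Finset.Icc 1 n, ∑ k ∈ Finset.Icc (j + 1) w, F s k)
        + ∑ k ∈ Finset.Icc 1 j, ∑ k' ∈ Finset.Icc (j + 1) w, Q k k' : ℕ) : ℤ)) :
    ∀ s k : ℕ, s ≤ n → k ≤ w → 0 ≤ (s : ℤ) * k + v s + u k - v 0 := by
  intro s k hs hk
  have hcorner : ∀ s' ∈ Ioc 0 s, ∀ k' ∈ Ioc 0 k, F s' k' ≤ 1 := fun s' hs' k' hk' =>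
    hF s' k' (mem_Ioc.1 hs').1 ((mem_Ioc.1 hs').2.trans hs) (mem_Ioc.1 hk').1
      ((mem_Ioc.1 hk').2.trans hk)
  have htotal : v 0 = blockSum F 0 n 0 w := by simp [hv0, blockSum, Nat.Icc_one_eq_Ioc_zero]
  have hsplit : (blockSum F 0 n 0 w : ℤ) ≤ s * k + blockSum F 0 n k w + blockSum F s n 0 w :=
    mod_cast blockSum_le_mul_add hs hk hcorner
  have hvs := blockSum_le_v hvn hv hv0 hs
  have huk := blockSum_le_u hu0 huw hv0 hu hk
  linarith

/-- **Main theorem, implication (e) ⇒ (d) in finite type A.**  If a separated finite type A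
bow diagram (segment dimensions `v n = 0, ..., v 0` on the arrow side and
`u 0 = v 0, ..., u w = 0` on the x-point side) admits a supersymmetric brane diagram giving
rise to it — fixed D3-branes `F` with at most one per pair `(○_s, x_k)`, and unfixed
D3-brane multiplicities `P` (between arrows) and `Q` (between x-points) realizing all
segment dimensions — then `s·k + v_s + u_k - v_0 ≥ 0` for all `0 ≤ s ≤ n`, `0 ≤ k ≤ w`. -/
theorem finite_supersymmetric_implies_susy_ineq
    (n w : ℕ) (hn : 1 ≤ n) (hw : 1 ≤ w)
    (v u : ℕ → ℤ) (hvn : v n = 0) (hu0 : u 0 = v 0) (huw : u w = 0)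
    (F P Q : ℕ → ℕ → ℕ)
    (hF : ∀ s k : ℕ, 1 ≤ s → s ≤ n → 1 ≤ k → k ≤ w → F s k ≤ 1)
    (hv : ∀ j : ℕ, 1 ≤ j → j < n →
      v j = (((∑ s ∈ Finset.Icc (j + 1) n, ∑ s' ∈ Finset.Icc 1 j, P s s')
        + ∑ s ∈ Finset.Icc (j + 1) n, ∑ k ∈ Finset.Icc 1 w, F s k : ℕ) : ℤ))
    (hv0 : v 0 = ((∑ s ∈ Finset.Icc 1 n, ∑ k ∈ Finset.Icc 1 w, F s k : ℕ) : ℤ))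
    (hu : ∀ j : ℕ, 1 ≤ j → j < w →
      u j = (((∑ s ∈ Finset.Icc 1 n, ∑ k ∈ Finset.Icc (j + 1) w, F s k)
        + ∑ k ∈ Finset.Icc 1 j, ∑ k' ∈ Finset.Icc (j + 1) w, Q k k' : ℕ) : ℤ)) :
    ∀ s k : ℕ, s ≤ n → k ≤ w → 0 ≤ (s : ℤ) * k + v s + u k - v 0 :=
  finite_supersymmetric_implies_susy_ineq_general n w v u hvn hu0 huw F P Q hF hv hv0 hu
end

section
/- Equivalence of the supersymmetry inequalities with the stratum condition in finite type A. For a separated finite type A bow diagram as above, the following are equivalent: (1) s·j + v_s + u_j − v_0 ≥ 0 for every s ∈ {0,...,n} and j ∈ {0,...,w}; (2) there exists a weakly decreasing tuple of natural numbers n ≥ κ_1 ≥ κ_2 ≥ ... ≥ κ_w ≥ 0 (a polynomial dominant gl_w-weight of level at most n) with Σ_{i=1}^w κ_i = v_0 (= Σ_{i=1}^w μ_i), such that Σ_{i=1}^j κ_i ≥ Σ_{i=1}^j μ_i for every j ∈ {1,...,w} (κ ≥ μ in dominance order), and Σ_{s=1}^d tκ_s ≥ Σ_{s=1}^d tλ_s,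 equivalently Σ_{s=1}^d tκ_s ≥ v_0 − v_d, for every d ∈ {1,...,n} (tκ ≥ tλ in dominance order). -/
open Finset

lemma tele_Icc (f : ℕ → ℤ) (j : ℕ) : ∑ i ∈ Icc 1 j, (f (i-1) - f i) = f 0 - f j := by
  induction j with
  | zero => simp
  | succ j ih => rw [Finset.sum_Icc_succ_top (by omega), ih]; simp only [Nat.add_sub_cancel]; ring

lemma swap_sum (w d : ℕ) (κ : ℕ → ℕ) :
    ∑ s ∈ Icc 1 d, ((Icc 1 w).filter fun i => s ≤ κ i).card
      = ∑ i ∈ Icc 1 w, min (κ i) d := by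
  have h1 : ∀ s, ((Icc 1 w).filter fun i => s ≤ κ i).card
      = ∑ i ∈ Icc 1 w, if s ≤ κ i then 1 else 0 := by
    intro s; rw [Finset.card_filter]
  simp_rw [h1]
  rw [Finset.sum_comm]
  refine Finset.sum_congr rfl fun i _ => ?_
  have : ((Icc 1 d).filter fun s => s ≤ κ i) = Icc 1 (min (κ i) d) := by
    ext s; simp [Finset.mem_filter, Finset.mem_Icc]; omega
  calc ∑ s ∈ Icc 1 d, (if s ≤ κ i then 1 else 0)
      = ((Icc 1 d).filter fun s => s ≤ κ i).card := by rw [Finset.card_filter]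
    _ = min (κ i) d := by rw [this, Nat.card_Icc]; omega

/-- **Equivalence of the supersymmetry inequalities with the stratum condition in finite
type A.**  For a separated finite type A bow diagram (segment dimensions
`v n = 0, ..., v 1, v 0` and `u 0 = v 0, u 1, ..., u (w-1), u w = 0`; set
`μ_j = u_{j-1} - u_j` and `tλ_s = v_{s-1} - v_s`), the supersymmetry inequalities
`s·j + v_s + u_j - v_0 ≥ 0` (for all `0 ≤ s ≤ n`, `0 ≤ j ≤ w`) hold if and only if there
exists a weakly decreasing tuple `n ≥ κ_1 ≥ ... ≥ κ_w ≥ 0` of naturals with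
`Σ κ_i = v_0`, with `κ ≥ μ` in dominance order, and with the conjugate partition `tκ`
satisfying `Σ_{s=1}^d tκ_s ≥ v_0 - v_d` for all `1 ≤ d ≤ n`. -/
theorem finite_susy_ineq_iff_stratum_condition
    (n w : ℕ) (hn : 1 ≤ n) (hw : 1 ≤ w)
    (v u : ℕ → ℤ) (hvn : v n = 0) (hu0 : u 0 = v 0) (huw : u w = 0) :
    (∀ s j : ℕ, s ≤ n → j ≤ w → 0 ≤ (s : ℤ) * j + v s + u j - v 0) ↔
    (∃ κ : ℕ → ℕ,
      (∀ i : ℕ, 1 ≤ i → i < w → κ (i + 1) ≤ κ i) ∧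
      κ 1 ≤ n ∧
      ((∑ i ∈ Finset.Icc 1 w, (κ i : ℤ)) = v 0) ∧
      (∀ j : ℕ, 1 ≤ j → j ≤ w →
        (∑ i ∈ Finset.Icc 1 j, (u (i - 1) - u i)) ≤ ∑ i ∈ Finset.Icc 1 j, (κ i : ℤ)) ∧
      (∀ d : ℕ, 1 ≤ d → d ≤ n →
        v 0 - v d ≤ ∑ s ∈ Finset.Icc 1 d,
          ((((Finset.Icc 1 w).filter fun i => s ≤ κ i).card : ℤ)))) := by
  constructor
  · intro h
    have hne : (Finset.range (n+1)).Nonempty := ⟨0, by simp⟩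
    set S : ℕ → ℤ := fun j => (Finset.range (n+1)).inf' hne (fun s => (s:ℤ)*j + v s) with hS
    have hS_le : ∀ s ≤ n, ∀ j : ℕ, S j ≤ (s:ℤ)*j + v s := by
      intro s hs j
      exact Finset.inf'_le _ (by simp [Finset.mem_range]; omega)
    have hS_lb : ∀ j ≤ w, v 0 - u j ≤ S j := by
      intro j hj
      apply Finset.le_inf'
      intro s hs
      simp only [Finset.mem_range] at hs
      have := h s j (by omega) hj
      linarith
    have hS0 : S 0 = 0 := by
      have h1 : S 0 ≤ 0 := by have := hS_le n le_rfl 0; simpa [hvn] using this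
      have h2 : (0:ℤ) ≤ S 0 := by have := hS_lb 0 (by omega); simpa [hu0] using this
      omega
    have hSw : S w = v 0 := by
      have h1 : S w ≤ v 0 := by have := hS_le 0 (by omega) w; simpa using this
      have h2 : v 0 ≤ S w := by have := hS_lb w le_rfl; simpa [huw] using this
      omega
    have hconc : ∀ j : ℕ, 1 ≤ j → S (j+1) + S (j-1) ≤ 2 * S j := by
      intro j hj
      obtain ⟨s, hs, hval⟩ := Finset.exists_mem_eq_inf' hne (fun s => (s:ℤ)*j + v s)
      simp only [Finset.mem_range] at hs
      have h1 := hS_le s (by omega) (j+1)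
      have h2 := hS_le s (by omega) (j-1)
      have hj1 : (((j+1:ℕ)):ℤ) = (j:ℤ)+1 := by omega
      have hj2 : (((j-1:ℕ)):ℤ) = (j:ℤ)-1 := by omega
      have hSj : S j = (s:ℤ)*j + v s := hval
      rw [hj1] at h1
      rw [hj2] at h2
      nlinarith [h1, h2, hSj]
    have hdec : ∀ j : ℕ, 1 ≤ j → S (j+1) - S j ≤ S j - S (j-1) := by
      intro j hj; have := hconc j hj; omega
    -- increments comparison
    have hkey : ∀ k j : ℕ, 1 ≤ j → S (j+k) - S (j+k-1) ≤ S j - S (j-1) := by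
      intro k
      induction k with
      | zero => intro j hj; simp
      | succ k ih =>
        intro j hj
        have h1 := ih j hj
        have h2 := hdec (j+k) (by omega)
        have e1 : j + (k+1) = (j+k) + 1 := by omega
        have e2 : j + (k+1) - 1 = j + k := by omega
        rw [e2, e1]
        omega
    have hmono : ∀ j : ℕ, 1 ≤ j → j ≤ w → 0 ≤ S j - S (j-1) := by
      intro j hj hjw
      have h1 := hkey (w - j) j hj
      have e1 : j + (w - j) = w := by omega
      rw [e1] at h1
      have h2 : S (w-1) ≤ v 0 := by
        have := hS_le 0 (by omega) (w-1); simpa using this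
      omega
    set κ : ℕ → ℕ := fun i => (S i - S (i-1)).toNat with hκdef
    have hκ : ∀ i : ℕ, 1 ≤ i → i ≤ w → (κ i : ℤ) = S i - S (i-1) := by
      intro i h1 h2
      exact Int.toNat_of_nonneg (hmono i h1 h2)
    have hκsum : ∀ j ≤ w, ∑ i ∈ Icc 1 j, (κ i : ℤ) = S j := by
      intro j hj
      induction j with
      | zero => simpa using hS0.symm
      | succ j ih =>
        rw [Finset.sum_Icc_succ_top (by omega), ih (by omega), hκ (j+1) (by omega) hj]
        simp only [Nat.add_sub_cancel]
        ring
    -- conjunct 1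
    have c1 : ∀ i : ℕ, 1 ≤ i → i < w → κ (i + 1) ≤ κ i := by
      intro i h1 h2
      have e1 := hκ i h1 (by omega)
      have e2 := hκ (i+1) (by omega) (by omega)
      have e3 := hdec i h1
      simp only [Nat.add_sub_cancel] at e2
      omega
    have c2 : κ 1 ≤ n := by
      have e1 := hκ 1 (by omega) hw
      have e2 := hS_le n le_rfl 1
      simp only [hvn] at e2
      push_cast at e2
      simp only [show (1:ℕ)-1=0 from rfl, hS0] at e1
      omega
    have c3 : ∑ i ∈ Icc 1 w, (κ i : ℤ) = v 0 := by rw [hκsum w le_rfl, hSw]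
    have c4 : ∀ j : ℕ, 1 ≤ j → j ≤ w →
        (∑ i ∈ Icc 1 j, (u (i - 1) - u i)) ≤ ∑ i ∈ Icc 1 j, (κ i : ℤ) := by
      intro j h1 h2
      rw [tele_Icc, hκsum j h2, hu0]
      exact hS_lb j h2
    have c5 : ∀ d : ℕ, 1 ≤ d → d ≤ n →
        v 0 - v d ≤ ∑ s ∈ Icc 1 d, ((((Icc 1 w).filter fun i => s ≤ κ i).card : ℤ)) := by
      intro d hd1 hd2
      have hvd : 0 ≤ v d := by have := h d 0 hd2 (by omega); simp [hu0] at this; linarith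
      have hswap : ∑ s ∈ Icc 1 d, ((((Icc 1 w).filter fun i => s ≤ κ i).card : ℤ))
          = ∑ i ∈ Icc 1 w, (min (κ i) d : ℤ) := by
        have := swap_sum w d κ
        exact_mod_cast this
      rw [hswap]
      -- invariant
      have hinv : ∀ j ≤ w, (∑ i ∈ Icc 1 j, max ((κ i : ℤ) - d) 0) ≤ v d ∧
          (1 ≤ j → (d:ℤ) < κ j → (∑ i ∈ Icc 1 j, max ((κ i : ℤ) - d) 0) = S j - d * j) := by
        intro j hj
        induction j with
        | zero => simp [hvd]
        | succ j ih =>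
          obtain ⟨ih1, ih2⟩ := ih (by omega)
          rw [Finset.sum_Icc_succ_top (by omega)]
          by_cases hc : (d:ℤ) < κ (j+1)
          · have hmax : max ((κ (j+1) : ℤ) - d) 0 = (κ (j+1) : ℤ) - d := by omega
            have hκj1 := hκ (j+1) (by omega) hj
            simp only [Nat.add_sub_cancel] at hκj1
            have heq : (∑ i ∈ Icc 1 j, max ((κ i : ℤ) - d) 0) = S j - d * j := by
              rcases Nat.eq_zero_or_pos j with hj0 | hj0
              · subst hj0; simp [hS0]
              · have hord : κ (j+1) ≤ κ j := c1 j hj0 (by omega)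
                exact ih2 hj0 (lt_of_lt_of_le hc (by exact_mod_cast hord))
            have hle : S (j+1) ≤ (d:ℤ) * (j+1) + v d := by
              have := hS_le d hd2 (j+1); push_cast at this ⊢; linarith
            constructor
            · rw [heq, hmax]; push_cast; linarith [hκj1, hle]
            · intro _ _; rw [heq, hmax]; push_cast; linarith [hκj1]
          · have hmax : max ((κ (j+1) : ℤ) - d) 0 = 0 := by omega
            constructor
            · rw [hmax]; linarith
            · intro _ hcontra; omega
      have hTw := (hinv w le_rfl).1
      have hmin : ∀ i ∈ Icc 1 w, (min (κ i) d : ℤ) = (κ i : ℤ) - max ((κ i : ℤ) - d) 0 := by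
        intro i _
        push_cast
        omega
      rw [Finset.sum_congr rfl hmin, Finset.sum_sub_distrib, c3]
      linarith
    exact ⟨κ, c1, c2, c3, c4, c5⟩
  · rintro ⟨κ, c1, c2, c3, c4, c5⟩
    intro s j hs hj
    have huj : v 0 - u j ≤ ∑ i ∈ Icc 1 j, (κ i : ℤ) := by
      rcases Nat.eq_zero_or_pos j with h0 | h0
      · subst h0; simp [hu0]
      · have := c4 j h0 hj
        rwa [tele_Icc u j, hu0] at this
    have hvs : v 0 - v s ≤ ∑ t ∈ Icc 1 s, ((((Icc 1 w).filter fun i => t ≤ κ i).card : ℤ)) := by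
      rcases Nat.eq_zero_or_pos s with h0 | h0
      · subst h0; simp
      · exact c5 s h0 hs
    -- swap the conjugate sum
    have hswap : ∑ t ∈ Icc 1 s, ((((Icc 1 w).filter fun i => t ≤ κ i).card : ℤ))
        = ∑ i ∈ Icc 1 w, (min (κ i) s : ℤ) := by
      exact_mod_cast swap_sum w s κ
    -- split [1,w] at j
    have hsplit : ∀ f : ℕ → ℕ, ∑ i ∈ Icc 1 w, f i = ∑ i ∈ Icc 1 j, f i + ∑ i ∈ Icc (j+1) w, f i := by
      intro f
      rw [show Finset.Icc 1 w = Finset.Ioc 0 w from Finset.Icc_add_one_left_eq_Ioc 0 w,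
          show Finset.Icc 1 j = Finset.Ioc 0 j from Finset.Icc_add_one_left_eq_Ioc 0 j,
          show Finset.Icc (j+1) w = Finset.Ioc j w from Finset.Icc_add_one_left_eq_Ioc j w]
      exact (Finset.sum_Ioc_consecutive f (Nat.zero_le j) hj).symm
    have hkey : ∑ i ∈ Icc 1 w, min (κ i) s + ∑ i ∈ Icc 1 j, κ i ≤ ∑ i ∈ Icc 1 w, κ i + s * j := by
      rw [hsplit (fun i => min (κ i) s), hsplit κ]
      have b1 : ∑ i ∈ Icc 1 j, min (κ i) s ≤ s * j := by
        calc ∑ i ∈ Icc 1 j, min (κ i) s ≤ ∑ i ∈ Icc 1 j, s :=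
              Finset.sum_le_sum fun i _ => min_le_right _ _
          _ = s * j := by rw [Finset.sum_const, Nat.card_Icc, smul_eq_mul, Nat.add_sub_cancel, Nat.mul_comm]
      have b2 : ∑ i ∈ Icc (j+1) w, min (κ i) s ≤ ∑ i ∈ Icc (j+1) w, κ i :=
        Finset.sum_le_sum fun i _ => min_le_left _ _
      omega
    have hkeyZ : (∑ i ∈ Icc 1 w, (min (κ i) s : ℤ)) + ∑ i ∈ Icc 1 j, (κ i : ℤ)
        ≤ ∑ i ∈ Icc 1 w, (κ i : ℤ) + (s:ℤ) * j := by exact_mod_cast hkey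
    rw [hswap] at hvs
    rw [c3] at hkeyZ
    linarith
end

section
/- Main theorem, implication (e)⇒(d): if the dimension vector of a separated affine type A bow diagram as above is realized by some supersymmetric affine D3-brane configuration M, then the diagram satisfies the supersymmetry inequalities: cD^t_{s,k} ≥ 0 and aD^t_{n+1-s,w+1-k} ≥ 0 for all t ≥ 1, s ∈ {0,...,n}, k ∈ {0,...,w}. -/
open Finset

theorem add_mod_of_lt {N a b : ℕ} (ha : a < N) (hb : b < N) :
    (a + b) % N = if N ≤ a + b then a + b - N else a + b := by
  rw [Nat.add_mod_eq_ite, Nat.mod_eq_of_lt ha, Nat.mod_eq_of_lt hb]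

def runWeight (N : ℕ) (c : ℕ → ℤ) (p L : ℕ) : ℤ := ∑ j ∈ range L, c ((p + j) % N)

theorem sum_range_add_mod (N p : ℕ) (c : ℕ → ℤ) :
    ∑ j ∈ range N, c ((p + j) % N) = ∑ i ∈ range N, c i := by
  induction p with
  | zero => exact sum_congr rfl fun j hj => by rw [zero_add, Nat.mod_eq_of_lt (mem_range.1 hj)]
  | succ p ih =>
    have shift := sum_range_succ' (fun j => c ((p + j) % N)) N
    rw [sum_range_succ, Nat.add_mod_right, add_zero] at shift
    simp only [← add_assoc, add_right_comm p 1] at shift ⊢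
    linarith

theorem runWeight_eq_div_add_mod (N : ℕ) (c : ℕ → ℤ) (p L : ℕ) :
    runWeight N c p L = (L / N : ℕ) * ∑ i ∈ range N, c i + runWeight N c p (L % N) := by
  suffices h : ∀ q r, runWeight N c p (N * q + r) = q * ∑ i ∈ range N, c i + runWeight N c p r by
    conv_lhs => rw [← Nat.div_add_mod L N]
    exact h _ _
  intro q r
  induction q with
  | zero => simp
  | succ q ih =>
    rw [Nat.mul_succ, add_right_comm, add_comm (N * q + r), runWeight, sum_range_add]
    simp only [← add_assoc, add_right_comm p N, Nat.add_mod_right, sum_range_add_mod]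
    rw [← runWeight, ih]
    push_cast
    ring

theorem sum_mul_card_filter_eq_runWeight {N : ℕ} (hN : 0 < N) (c : ℕ → ℤ) (p L : ℕ) :
    ∑ i ∈ range N, c i * #{τ ∈ range L | (p + τ) % N = i} = runWeight N c p L := by
  rw [runWeight, ← sum_fiberwise_of_maps_to (g := fun τ => (p + τ) % N)
    (fun τ _ => mem_range.2 (Nat.mod_lt _ hN)) (fun τ => c ((p + τ) % N))]
  refine sum_congr rfl fun i _ => ?_
  rw [sum_congr rfl fun τ hτ => congrArg c (mem_filter.1 hτ).2, sum_const, nsmul_eq_mul, mul_comm]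

theorem sum_mul_eq_sum_runWeight {N : ℕ} (hN : 0 < N) (M : ℕ × ℕ →₀ ℕ) {g : ℕ → ℤ}
    (hreal : ∀ i < N,
      g i = ((M.sum fun pL m => m * #{τ ∈ range pL.2 | (pL.1 + τ) % N = i} : ℕ) : ℤ))
    (c : ℕ → ℤ) :
    ∑ i ∈ range N, c i * g i = M.sum fun pL m => (m : ℤ) * runWeight N c pL.1 pL.2 := by
  calc ∑ i ∈ range N, c i * g i
      = ∑ i ∈ range N, ∑ pL ∈ M.support,
          (M pL : ℤ) * (c i * #{τ ∈ range pL.2 | (pL.1 + τ) % N = i}) := by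
        refine sum_congr rfl fun i hi => ?_
        rw [hreal i (mem_range.1 hi), Nat.cast_finsupp_sum, Finsupp.sum, mul_sum]
        push_cast
        exact sum_congr rfl fun _ _ => by ring
    _ = M.sum fun pL m => (m : ℤ) * runWeight N c pL.1 pL.2 := by
        rw [sum_comm]
        exact sum_congr rfl fun pL _ => by rw [← mul_sum, sum_mul_card_filter_eq_runWeight hN]

abbrev RunCovers (N p r j : ℕ) : Prop := p ≤ j ∧ j < p + r ∨ j + N < p + r

theorem runWeight_single {N p j r : ℕ} (hp : p < N) (hj : j < N) (hr : r ≤ N) (v : ℤ) :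
    runWeight N (Pi.single j v) p r = if RunCovers N p r j then v else 0 := by
  have hit : ∀ τ ∈ range r, (Pi.single j v : ℕ → ℤ) ((p + τ) % N)
      = if τ = (if p ≤ j then j - p else j + N - p) then v else 0 := by
    intro τ hτ
    have := mem_range.1 hτ
    rw [Pi.single_apply, add_mod_of_lt hp (by omega)]
    exact if_congr (by split_ifs <;> omega) rfl rfl
  rw [runWeight, sum_congr rfl hit, sum_ite_eq']
  simp only [mem_range]
  exact if_congr (by split_ifs <;> omega) rfl rfl

theorem runWeight_add (N : ℕ) (c d : ℕ → ℤ) (p r : ℕ) :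
    runWeight N (c + d) p r = runWeight N c p r + runWeight N d p r :=
  sum_add_distrib

theorem runWeight_sub (N : ℕ) (c d : ℕ → ℤ) (p r : ℕ) :
    runWeight N (c - d) p r = runWeight N c p r - runWeight N d p r :=
  sum_sub_distrib ..

section Defect

variable (N t : ℕ) (P E : Finset ℕ) (εP εE : ℕ → ℕ)

/-- A brane from `p ∈ P` to `e ∈ E` winding `L / N` times has `c`-weight at least
`L / N + εP p + εE e - t`; its defect is how far this lower bound can fall below zero. -/
def defect (p L : ℕ) : ℕ :=
  if p ∈ P ∧ (p + L) % N ∈ E then t - L / N - (εP p + εE ((p + L) % N)) else 0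

variable {N t P E εP εE} {c : ℕ → ℤ}

theorem neg_defect_le_mul_runWeight (hc : ∑ i ∈ range N, c i = 1)
    (hgood : ∀ p r, p < N → r < N → ¬(p ∈ P ∧ (p + r) % N ∈ E) → 0 ≤ runWeight N c p r)
    (hbad : ∀ p r, p < N → r < N → p ∈ P → (p + r) % N ∈ E →
      (εP p + εE ((p + r) % N) : ℤ) - t ≤ runWeight N c p r)
    {p L m : ℕ} (hp : p < N) (hm : p ∈ P → (p + L) % N ∈ E → m ≤ 1) :
    -(defect N t P E εP εE p L : ℤ) ≤ m * runWeight N c p L := by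
  have hrun := runWeight_eq_div_add_mod N c p L
  rw [hc, mul_one] at hrun
  have hend : (p + L % N) % N = (p + L) % N := Nat.add_mod_mod p L N
  have hr : L % N < N := Nat.mod_lt _ (by omega)
  unfold defect
  split_ifs with hB
  · have hshort := hbad p (L % N) hp hr hB.1 (hend ▸ hB.2)
    rw [hend] at hshort
    rcases Nat.le_one_iff_eq_zero_or_eq_one.1 (hm hB.1 hB.2) with rfl | rfl
    · simp
    · omega
  · have hshort := hgood p (L % N) hp hr (hend ▸ hB)
    have : 0 ≤ runWeight N c p L := by rw [hrun]; exact add_nonneg (by positivity) hshort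
    simpa using mul_nonneg (Nat.cast_nonneg m) this

/-- A brane of positive defect is determined by its start, its end and its winding number. -/
theorem sum_defect_le (S : Finset (ℕ × ℕ)) :
    ∑ pL ∈ S, defect N t P E εP εE pL.1 pL.2
      ≤ ∑ p ∈ P, ∑ e ∈ E, ∑ q ∈ range t, (t - q - (εP p + εE e)) := by
  classical
  set f : ℕ × ℕ → ℕ × ℕ × ℕ := fun pL => (pL.1, (pL.1 + pL.2) % N, pL.2 / N)
  set S' := S.filter fun pL => defect N t P E εP εE pL.1 pL.2 ≠ 0
  have hinj : Set.InjOn f S' := by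
    rintro ⟨p, L⟩ - ⟨p', L'⟩ - h
    simp only [f, Prod.mk.injEq] at h
    obtain ⟨rfl, hend, hdiv⟩ := h
    have hmod : L % N = L' % N := Nat.ModEq.add_left_cancel' p hend
    rw [Prod.mk.injEq, ← Nat.div_add_mod L N, ← Nat.div_add_mod L' N, hmod, hdiv]
    exact ⟨rfl, rfl⟩
  have hmaps : S'.image f ⊆ P ×ˢ E ×ˢ range t := by
    simp only [S', subset_iff, mem_image, mem_filter, mem_product, mem_range]
    rintro _ ⟨⟨p, L⟩, ⟨-, hne⟩, rfl⟩
    unfold defect at hne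
    split_ifs at hne with hB
    · dsimp only [f] at hne ⊢
      exact ⟨hB.1, hB.2, by omega⟩
    · exact absurd rfl hne
  calc ∑ pL ∈ S, defect N t P E εP εE pL.1 pL.2
      = ∑ pL ∈ S', defect N t P E εP εE pL.1 pL.2 := (sum_filter_ne_zero _).symm
    _ = ∑ x ∈ S'.image f, (t - x.2.2 - (εP x.1 + εE x.2.1)) := by
        rw [sum_image hinj]
        refine sum_congr rfl fun pL hpL => ?_
        have hne := (mem_filter.1 hpL).2
        unfold defect at hne ⊢
        split_ifs at hne ⊢
        · rfl
        · exact absurd rfl hne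
    _ ≤ ∑ x ∈ P ×ˢ E ×ˢ range t, (t - x.2.2 - (εP x.1 + εE x.2.1)) := sum_le_sum_of_subset hmaps
    _ = ∑ p ∈ P, ∑ e ∈ E, ∑ q ∈ range t, (t - q - (εP p + εE e)) := by
        rw [sum_product]
        exact sum_congr rfl fun p _ => sum_product ..

theorem neg_sum_le_sum_mul_runWeight (M : ℕ × ℕ →₀ ℕ) (hdom : ∀ p L, M (p, L) ≠ 0 → p < N)
    (hsusy : ∀ p L, M (p, L) ≠ 0 → p ∈ P → (p + L) % N ∈ E → M (p, L) ≤ 1)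
    (hc : ∑ i ∈ range N, c i = 1)
    (hgood : ∀ p r, p < N → r < N → ¬(p ∈ P ∧ (p + r) % N ∈ E) → 0 ≤ runWeight N c p r)
    (hbad : ∀ p r, p < N → r < N → p ∈ P → (p + r) % N ∈ E →
      (εP p + εE ((p + r) % N) : ℤ) - t ≤ runWeight N c p r) :
    -((∑ p ∈ P, ∑ e ∈ E, ∑ q ∈ range t, (t - q - (εP p + εE e)) : ℕ) : ℤ)
      ≤ M.sum fun pL m => (m : ℤ) * runWeight N c pL.1 pL.2 := by
  calc -((∑ p ∈ P, ∑ e ∈ E, ∑ q ∈ range t, (t - q - (εP p + εE e)) : ℕ) : ℤ)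
      ≤ ∑ pL ∈ M.support, -(defect N t P E εP εE pL.1 pL.2 : ℤ) := by
        rw [sum_neg_distrib, neg_le_neg_iff]
        exact_mod_cast sum_defect_le M.support
    _ ≤ M.sum fun pL m => (m : ℤ) * runWeight N c pL.1 pL.2 := by
        refine sum_le_sum fun ⟨p, L⟩ hpL => ?_
        have hM := Finsupp.mem_support_iff.1 hpL
        exact neg_defect_le_mul_runWeight hc hgood hbad (hdom p L hM) (hsusy p L hM)

end Defect

theorem two_mul_sum_range_tsub (t x : ℕ) (hx : x ≤ t + 1) :
    2 * ∑ q ∈ range t, ((t - q - x : ℕ) : ℤ) = ((t : ℤ) - x) * ((t : ℤ) - x + 1) := by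
  induction t with
  | zero => interval_cases x <;> simp
  | succ t ih =>
    rw [sum_range_succ']
    simp only [Nat.add_sub_add_right]
    rcases Nat.lt_or_ge (t + 1) x with hlt | hle
    · have hzero : ∀ q ∈ range t, ((t - q - x : ℕ) : ℤ) = 0 := fun q _ => by rw [Nat.cast_eq_zero]; omega
      rw [sum_congr rfl hzero, sum_const_zero, Nat.sub_eq_zero_of_le (by omega : t + 1 - 0 ≤ x),
        show x = t + 2 by omega]
      push_cast
      ring
    · rw [mul_add, ih hle, Nat.cast_sub (by omega)]
      push_cast
      ring

theorem sum_Ico_ite_lt (f : ℕ → ℤ) {a j b : ℕ} (haj : a ≤ j) (hjb : j ≤ b) (x y : ℕ) :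
    ∑ i ∈ Ico a b, f (if i < j then x else y) = (j - a : ℕ) * f x + (b - j : ℕ) * f y := by
  have hlow : ∑ i ∈ Ico a j, f (if i < j then x else y) = ∑ i ∈ Ico a j, f x :=
    sum_congr rfl fun i hi => by rw [if_pos (mem_Ico.1 hi).2]
  have hhigh : ∑ i ∈ Ico j b, f (if i < j then x else y) = ∑ i ∈ Ico j b, f y :=
    sum_congr rfl fun i hi => by rw [if_neg (not_lt.2 (mem_Ico.1 hi).1)]
  rw [← sum_Ico_consecutive _ haj hjb, hlow, hhigh, sum_const, sum_const, Nat.card_Ico,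
    Nat.card_Ico, nsmul_eq_mul, nsmul_eq_mul]

def segmentDim (n w : ℕ) (va vx : ℕ → ℤ) (i : ℕ) : ℤ :=
  if i < w then vx (i + 1) else va (n + w - 1 - i)

/-- The segments `n + w - 1 - s`, `k - 1` (`n + w - 1` if `k = 0`), `w - 1` and `n + w - 1`
carry `v_s`, `v_{-k}`, `v_{-w}` and `v_0`. -/
def cDWeight (n w t s k : ℕ) : ℕ → ℤ :=
  Pi.single (n + w - 1 - s) 1 + Pi.single (if k = 0 then n + w - 1 else k - 1) 1
    + Pi.single (w - 1) ((t : ℤ) - 1) - Pi.single (n + w - 1) (t : ℤ)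

section cDWeight

variable {n w t s k : ℕ}

theorem sum_cDWeight (hN : 0 < n + w) (hs : s ≤ n) (hk : k ≤ w) :
    ∑ i ∈ range (n + w), cDWeight n w t s k i = 1 := by
  simp only [cDWeight, Pi.add_apply, Pi.sub_apply, sum_add_distrib, sum_sub_distrib,
    sum_pi_single', mem_range]
  split_ifs <;> omega

theorem sum_cDWeight_mul_segmentDim (hn : 1 ≤ n) (hw : 1 ≤ w) (hs : s ≤ n) (hk : k ≤ w)
    {va vx : ℕ → ℤ} (hvx0 : vx 0 = va 0) (hvnw : vx w = va n) :
    ∑ i ∈ range (n + w), cDWeight n w t s k i * segmentDim n w va vx i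
      = va s + vx k + ((t : ℤ) - 1) * vx w - t * va 0 := by
  have hva : ∀ j ≤ n, segmentDim n w va vx (n + w - 1 - j) = va j := by
    intro j hj
    unfold segmentDim
    split_ifs with h
    · obtain rfl : j = n := by omega
      rw [← hvnw]
      congr 1
      omega
    · rw [show n + w - 1 - (n + w - 1 - j) = j by omega]
  have hvx : ∀ j ≤ w, segmentDim n w va vx (if j = 0 then n + w - 1 else j - 1) = vx j := by
    intro j hj
    unfold segmentDim
    split_ifs with h0 h
    · omega
    · rw [h0, hvx0, show n + w - 1 - (n + w - 1) = 0 by omega]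
    · rw [Nat.sub_add_cancel (by omega)]
    · omega
  have hv0 := hva 0 (Nat.zero_le n)
  have hvw := hvx w le_rfl
  rw [Nat.sub_zero] at hv0
  rw [if_neg (by omega)] at hvw
  simp only [cDWeight, Pi.add_apply, Pi.sub_apply, add_mul, sub_mul, sum_add_distrib,
    sum_sub_distrib, Pi.single_apply, ite_mul, zero_mul, sum_ite_eq', mem_range, hva s hs,
    hvx k hk, hv0, hvw]
  split_ifs <;> omega

theorem runWeight_cDWeight (hN : 0 < n + w) (hs : s ≤ n) (hk : k ≤ w) {p r : ℕ}
    (hp : p < n + w) (hr : r ≤ n + w) :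
    runWeight (n + w) (cDWeight n w t s k) p r
      = (if RunCovers (n + w) p r (n + w - 1 - s) then 1 else 0)
        + (if RunCovers (n + w) p r (if k = 0 then n + w - 1 else k - 1) then 1 else 0)
        + (if RunCovers (n + w) p r (w - 1) then (t : ℤ) - 1 else 0)
        - (if RunCovers (n + w) p r (n + w - 1) then (t : ℤ) else 0) := by
  have hj2 : (if k = 0 then n + w - 1 else k - 1) < n + w := by split_ifs <;> omega
  rw [cDWeight, runWeight_sub, runWeight_add, runWeight_add, runWeight_single hp (by omega) hr,
    runWeight_single hp hj2 hr, runWeight_single hp (by omega) hr,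
    runWeight_single hp (by omega) hr]

theorem cDWeight_runWeight_nonneg (hw : 1 ≤ w) (ht : 1 ≤ t) (hs : s ≤ n) (hk : k ≤ w) {p r : ℕ}
    (hp : p < n + w) (hr : r < n + w) (hgood : ¬(p ∈ Ico w (n + w) ∧ (p + r) % (n + w) ∈ range w)) :
    0 ≤ runWeight (n + w) (cDWeight n w t s k) p r := by
  rw [mem_Ico, mem_range, add_mod_of_lt hp hr] at hgood
  rw [runWeight_cDWeight (by omega) hs hk hp hr.le]
  unfold RunCovers
  split_ifs at hgood ⊢ <;> omega

theorem cDWeight_runWeight_ge (hs : s ≤ n) (hk : k ≤ w) {p r : ℕ}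
    (hp : p < n + w) (hr : r < n + w) (hP : p ∈ Ico w (n + w)) (hE : (p + r) % (n + w) ∈ range w) :
    ((if p < n + w - s then 1 else 0 : ℕ) + (if (p + r) % (n + w) < k then 0 else 1 : ℕ) : ℤ) - t
      ≤ runWeight (n + w) (cDWeight n w t s k) p r := by
  rw [mem_Ico] at hP
  rw [mem_range] at hE
  rw [runWeight_cDWeight (by omega) hs hk hp hr.le, add_mod_of_lt hp hr] at *
  unfold RunCovers
  split_ifs at hE ⊢ <;> omega

theorem cD_defect_count (ht : 1 ≤ t) (hs : s ≤ n) (hk : k ≤ w) :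
    ((∑ p ∈ Ico w (n + w), ∑ e ∈ range w, ∑ q ∈ range t,
        (t - q - ((if p < n + w - s then 1 else 0) + (if e < k then 0 else 1))) : ℕ) : ℤ)
      = s * k + ((t : ℤ) - 1) * (s * w + k * n) + ((t : ℤ) - 1) * ((t : ℤ) - 2) / 2 * w * n := by
  set F : ℕ → ℤ := fun x => ∑ q ∈ range t, ((t - q - x : ℕ) : ℤ)
  have h0 : 2 * F 0 = (t - 0) * (t - 0 + 1) := two_mul_sum_range_tsub t 0 (by omega)
  have h1 : 2 * F 1 = (t - 1) * (t - 1 + 1) := two_mul_sum_range_tsub t 1 (by omega)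
  have h2 : 2 * F 2 = (t - 2) * (t - 2 + 1) := two_mul_sum_range_tsub t 2 (by omega)
  have hF0 : F 0 = F 2 + 2 * t - 1 := by linarith
  have hF1 : F 1 = F 2 + t - 1 := by linarith
  have hF2 : ((t : ℤ) - 1) * ((t : ℤ) - 2) / 2 = F 2 :=
    Int.ediv_eq_of_eq_mul_left two_ne_zero (by linarith)
  have hxpoints : ∀ x, ∑ e ∈ range w, F (x + if e < k then 0 else 1)
      = k * F x + (w - k : ℕ) * F (x + 1) := by
    intro x
    rw [range_eq_Ico, sum_Ico_ite_lt (fun y => F (x + y)) (Nat.zero_le k) hk, Nat.sub_zero,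
      add_zero]
  simp only [Nat.cast_sum]
  change ∑ p ∈ Ico w (n + w), ∑ e ∈ range w, F (_ + _) = _
  rw [sum_congr rfl fun p _ => hxpoints _,
    sum_Ico_ite_lt (fun y => k * F y + (w - k : ℕ) * F (y + 1)) (by omega : w ≤ n + w - s)
      (Nat.sub_le _ _) 1 0,
    show n + w - s - w = n - s by omega, show n + w - (n + w - s) = s by omega, hF2, hF0, hF1]
  push_cast [hs, hk]
  ring

end cDWeight

section Rotation

variable {n w : ℕ}

theorem add_mod_lt_iff (hw : 1 ≤ w) (x : ℕ) : (x + n) % (n + w) < n ↔ w ≤ x % (n + w) := by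
  have hx : x % (n + w) < n + w := Nat.mod_lt _ (by omega)
  rw [← Nat.mod_add_mod, add_mod_of_lt hx (by omega)]
  split_ifs <;> omega

theorem add_mod_eq_iff {x i : ℕ} (hi : i < n + w) :
    (x + n) % (n + w) = i ↔ x % (n + w) = (i + w) % (n + w) := by
  have hwrap : (i + w + n) % (n + w) = i := by
    rw [add_assoc, add_comm w n, Nat.add_mod_right, Nat.mod_eq_of_lt hi]
  constructor
  · intro h
    exact Nat.ModEq.add_right_cancel' n (h.trans hwrap.symm)
  · intro h
    rw [← hwrap]
    exact Nat.ModEq.add_right n h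

theorem segmentDim_rotate {va vx : ℕ → ℤ} {i : ℕ} (hi : i < w + n) :
    segmentDim w n (fun s => vx (w - s)) (fun k => va (n - k)) i
      = segmentDim n w va vx ((i + w) % (n + w)) := by
  unfold segmentDim
  rcases Nat.lt_or_ge i n with h | h
  · rw [Nat.mod_eq_of_lt (by omega), if_pos h, if_neg (by omega)]
    dsimp only
    congr 1
    omega
  · rw [Nat.mod_eq_sub_mod (by omega), Nat.mod_eq_of_lt (by omega), if_neg (by omega),
      if_pos (by omega)]
    dsimp only
    congr 1
    omega

/-- In the rotated numbering the `n` arrows are the first points and the `w` x-points the last. -/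
noncomputable def rotateConfig (n w : ℕ) (M : ℕ × ℕ →₀ ℕ) : ℕ × ℕ →₀ ℕ :=
  M.mapDomain fun pL => ((pL.1 + n) % (n + w), pL.2)

variable {M : ℕ × ℕ →₀ ℕ}

theorem rotateConfig_apply (hdom : ∀ p L, M (p, L) ≠ 0 → p < n + w) {q : ℕ} (hq : q < n + w)
    (L : ℕ) : rotateConfig n w M ((q + n) % (n + w), L) = M (q, L) := by
  refine Finsupp.mapDomain_apply' {pL : ℕ × ℕ | pL.1 < n + w} M
    (fun pL hpL => hdom _ _ (Finsupp.mem_support_iff.1 hpL)) ?_ (a := (q, L)) hq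
  rintro ⟨p, L⟩ (hp : p < n + w) ⟨p', L'⟩ (hp' : p' < n + w) h
  simp only [Prod.mk.injEq] at h
  obtain ⟨hmod, rfl⟩ := h
  have := Nat.ModEq.add_right_cancel' n hmod
  rw [Nat.ModEq, Nat.mod_eq_of_lt hp, Nat.mod_eq_of_lt hp'] at this
  rw [this]

theorem exists_of_rotateConfig_ne_zero {p L : ℕ} (h : rotateConfig n w M (p, L) ≠ 0) :
    ∃ q, M (q, L) ≠ 0 ∧ (q + n) % (n + w) = p := by
  classical
  obtain ⟨⟨q, L'⟩, hq, he⟩ := mem_image.1 (Finsupp.mapDomain_support (Finsupp.mem_support_iff.2 h))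
  simp only [Prod.mk.injEq] at he
  obtain ⟨rfl, rfl⟩ := he
  exact ⟨q, Finsupp.mem_support_iff.1 hq, rfl⟩

theorem sum_rotateConfig {i : ℕ} (hi : i < n + w) :
    (rotateConfig n w M).sum (fun pL m => m * #{τ ∈ range pL.2 | (pL.1 + τ) % (n + w) = i})
      = M.sum fun pL m => m * #{τ ∈ range pL.2 | (pL.1 + τ) % (n + w) = (i + w) % (n + w)} := by
  rw [rotateConfig, Finsupp.sum_mapDomain_index (fun _ => zero_mul _) (fun _ _ _ => add_mul ..)]
  refine Finsupp.sum_congr fun pL _ => ?_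
  congr 2
  refine filter_congr fun τ _ => ?_
  rw [Nat.mod_add_mod, add_right_comm, add_mod_eq_iff hi]

theorem rotateConfig_fst_lt (hdom : ∀ p L, M (p, L) ≠ 0 → p < n + w) (p L : ℕ)
    (h : rotateConfig n w M (p, L) ≠ 0) : p < w + n := by
  obtain ⟨q, hq, rfl⟩ := exists_of_rotateConfig_ne_zero h
  have := hdom q L hq
  rw [add_comm w n]
  exact Nat.mod_lt _ (by omega)

theorem rotateConfig_le_one (hw : 1 ≤ w) (hdom : ∀ p L, M (p, L) ≠ 0 → p < n + w)
    (hsusy : ∀ p L, M (p, L) ≠ 0 → p < w → w ≤ (p + L) % (n + w) → M (p, L) ≤ 1)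
    (p L : ℕ) (h : rotateConfig n w M (p, L) ≠ 0) (hp : n ≤ p) (hpL : (p + L) % (w + n) < n) :
    rotateConfig n w M (p, L) ≤ 1 := by
  obtain ⟨q, hq, rfl⟩ := exists_of_rotateConfig_ne_zero h
  have hqN := hdom q L hq
  rw [add_comm w n, Nat.mod_add_mod, add_right_comm, add_mod_lt_iff hw] at hpL
  rw [← not_lt, add_mod_lt_iff hw, Nat.mod_eq_of_lt hqN] at hp
  rw [rotateConfig_apply hdom hqN]
  exact hsusy q L hq (by omega) hpL

theorem rotateConfig_realizes {va vx : ℕ → ℤ}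
    (hreal : ∀ i < n + w, segmentDim n w va vx i =
      ((M.sum fun pL m => m * #{τ ∈ range pL.2 | (pL.1 + τ) % (n + w) = i} : ℕ) : ℤ))
    (i : ℕ) (hi : i < w + n) :
    segmentDim w n (fun s => vx (w - s)) (fun k => va (n - k)) i =
      (((rotateConfig n w M).sum fun pL m => m * #{τ ∈ range pL.2 | (pL.1 + τ) % (w + n) = i} :
        ℕ) : ℤ) := by
  rw [segmentDim_rotate hi, hreal _ (Nat.mod_lt _ (by omega)), add_comm w n,
    sum_rotateConfig (by omega)]

end Rotation

section Inequalities

variable {n w : ℕ} {va vx : ℕ → ℤ} {M : ℕ × ℕ →₀ ℕ} {t s k : ℕ}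

theorem cD_nonneg (hn : 1 ≤ n) (hw : 1 ≤ w) (hvx0 : vx 0 = va 0) (hvnw : vx w = va n)
    (hdom : ∀ p L, M (p, L) ≠ 0 → p < n + w)
    (hsusy : ∀ p L, M (p, L) ≠ 0 → w ≤ p → (p + L) % (n + w) < w → M (p, L) ≤ 1)
    (hreal : ∀ i < n + w, segmentDim n w va vx i =
      ((M.sum fun pL m => m * #{τ ∈ range pL.2 | (pL.1 + τ) % (n + w) = i} : ℕ) : ℤ))
    (ht : 1 ≤ t) (hs : s ≤ n) (hk : k ≤ w) :
    0 ≤ (s : ℤ) * k + ((t : ℤ) - 1) * ((s : ℤ) * w + (k : ℤ) * n)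
        + ((t : ℤ) - 1) * ((t : ℤ) - 2) / 2 * w * n
        + va s + vx k + ((t : ℤ) - 1) * vx w - (t : ℤ) * va 0 := by
  have hbound := neg_sum_le_sum_mul_runWeight (t := t) (P := Ico w (n + w)) (E := range w)
    (εP := fun p => if p < n + w - s then 1 else 0) (εE := fun e => if e < k then 0 else 1)
    M hdom (fun p L hM hP hE => hsusy p L hM (mem_Ico.1 hP).1 (mem_range.1 hE))
    (sum_cDWeight (by omega) hs hk)
    (fun p r hp hr hgood => cDWeight_runWeight_nonneg hw ht hs hk hp hr hgood)
    (fun p r hp hr hP hE => cDWeight_runWeight_ge hs hk hp hr hP hE)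
  rw [← sum_mul_eq_sum_runWeight (by omega) M hreal,
    sum_cDWeight_mul_segmentDim hn hw hs hk hvx0 hvnw, cD_defect_count ht hs hk] at hbound
  linarith

theorem aD_nonneg (hn : 1 ≤ n) (hw : 1 ≤ w) (hvx0 : vx 0 = va 0) (hvnw : vx w = va n)
    (hdom : ∀ p L, M (p, L) ≠ 0 → p < n + w)
    (hsusy : ∀ p L, M (p, L) ≠ 0 → p < w → w ≤ (p + L) % (n + w) → M (p, L) ≤ 1)
    (hreal : ∀ i < n + w, segmentDim n w va vx i =
      ((M.sum fun pL m => m * #{τ ∈ range pL.2 | (pL.1 + τ) % (n + w) = i} : ℕ) : ℤ))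
    (ht : 1 ≤ t) (hs : s ≤ n) (hk : k ≤ w) :
    0 ≤ (s : ℤ) * k + ((t : ℤ) - 1) * ((s : ℤ) * w + (k : ℤ) * n)
        + ((t : ℤ) - 1) * ((t : ℤ) - 2) / 2 * w * n
        + va (n - s) + vx (w - k) + ((t : ℤ) - 1) * va 0 - (t : ℤ) * vx w := by
  have hrot := cD_nonneg hw hn (by simp [hvnw]) (by simp [hvx0])
    (rotateConfig_fst_lt hdom) (rotateConfig_le_one hw hdom hsusy)
    (rotateConfig_realizes hreal) ht hk hs
  simp only [Nat.sub_zero, Nat.sub_self] at hrot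
  linear_combination hrot

end Inequalities

/-- **Main theorem, implication (e) ⇒ (d).**  If the dimension vector of a separated affine
type A bow diagram is realized by some supersymmetric affine D3-brane configuration `M`
(where `M (p, L)` counts D3-branes starting at point `p` of `ℤ/(n+w)`, points `0,...,w-1`
being the x-points and `w,...,n+w-1` the arrows, running anticlockwise across `L ≥ 1`
segments; supersymmetry says at most one fixed D3-brane per pair of 5-branes of different
types, orientation and winding number), then the diagram satisfies the supersymmetry
inequalities. -/
theorem supersymmetric_implies_susy_ineq
    (n w : ℕ) (hn : 1 ≤ n) (hw : 1 ≤ w)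
    (va vx : ℕ → ℤ) (hvx0 : vx 0 = va 0) (hvnw : vx w = va n)
    (M : ℕ × ℕ →₀ ℕ)
    (hdom : ∀ p L : ℕ, M (p, L) ≠ 0 → p < n + w ∧ 1 ≤ L)
    (hsusyM : ∀ p L : ℕ, p < n + w → 1 ≤ L →
      Xor' (p < w) ((p + L) % (n + w) < w) → M (p, L) ≤ 1)
    (hreal : ∀ i : ℕ, i < n + w →
      (if i < w then vx (i + 1) else va (n + w - 1 - i)) =
        ((M.sum fun pL m =>
          m * ((Finset.range pL.2).filter fun t => (pL.1 + t) % (n + w) = i).card : ℕ) :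
          ℤ)) :
    SatisfiesSusyIneq n w va vx := by
  intro t s k ht hs hk
  have hdom' : ∀ p L, M (p, L) ≠ 0 → p < n + w := fun p L h => (hdom p L h).1
  exact ⟨cD_nonneg hn hw hvx0 hvnw hdom'
      (fun p L h hp he => hsusyM p L (hdom' p L h) (hdom p L h).2 (Or.inr ⟨he, by omega⟩))
      hreal ht hs hk,
    aD_nonneg hn hw hvx0 hvnw hdom'
      (fun p L h hp he => hsusyM p L (hdom' p L h) (hdom p L h).2 (Or.inl ⟨hp, by omega⟩))
      hreal ht hs hk⟩
end

section
/- Key step in the proof that supersymmetric increments between x-points preserve non-emptiness of bow varieties (preservation of condition (S1)): Let V and U be finite-dimensional complex vector spaces, A : V → U and b : V → ℂ linear maps, B an endomorphism of V, u₀ ∈ U a vector, and c ∈ ℂ such that B − c·id_V is invertible. Define on V ⊕ ℂ the linear maps A'(x,λ) = A(x) + λ·u₀ (into U), b'(x,λ) = b(x) + λ (into ℂ), and the endomorphism B'(x,λ) = (B(x), c·λ). If the only B-invariant subspace of V contained in ker A ∩ ker b is the zero subspace, then the only B'-invariant subspace of V ⊕ ℂ contained in ker A' ∩ ker b' is the zero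 subspace. -/
/-!
Let `S ⊆ V × ℂ` be `B'`-invariant and inside `ker A' ∩ ker b'`, and let
`T = {x | (x, 0) ∈ S}`. Then `T` is `B`-invariant and inside `ker A ∩ ker b`, so `T = 0`.
For `(x, l) ∈ S`, the vector `(B' - c)(x, l) = ((B - c) x, 0)` lies in `S`, so
`(B - c) x ∈ T = 0`, whence `x = 0` by invertibility of `B - c`, and then `0 = b' (0, l) = l`.
-/

section

variable {R M : Type*} [CommRing R] [AddCommGroup M] [Module R M]
  {B : M →ₗ[R] M} {c : R} {B' : M × R →ₗ[R] M × R}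

theorem Submodule.mapsTo_comap_inl (hB' : ∀ x l, B' (x, l) = (B x, c * l))
    {S : Submodule R (M × R)} (hS : ∀ z ∈ S, B' z ∈ S) :
    ∀ x ∈ S.comap (LinearMap.inl R M R), B x ∈ S.comap (LinearMap.inl R M R) := by
  intro x hx
  simpa [hB'] using hS _ hx

theorem Submodule.sub_smul_fst_mem_comap_inl (hB' : ∀ x l, B' (x, l) = (B x, c * l))
    {S : Submodule R (M × R)} (hS : ∀ z ∈ S, B' z ∈ S) {z : M × R} (hz : z ∈ S) :
    (B - c • LinearMap.id : M →ₗ[R] M) z.1 ∈ S.comap (LinearMap.inl R M R) := by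
  have hdiff : B' z - c • z = ((B - c • LinearMap.id : M →ₗ[R] M) z.1, (0 : R)) := by
    obtain ⟨x, l⟩ := z
    simp [hB']
  rw [Submodule.mem_comap, LinearMap.inl_apply, ← hdiff]
  exact S.sub_mem (hS z hz) (S.smul_mem c hz)

end

theorem condition_S1_preserved_general
    {V U : Type*} [AddCommGroup V] [Module ℂ V]
    [AddCommGroup U] [Module ℂ U]
    (A : V →ₗ[ℂ] U) (b : V →ₗ[ℂ] ℂ) (B : V →ₗ[ℂ] V) (u₀ : U) (c : ℂ)
    (hBc : Function.Bijective (B - c • (LinearMap.id : V →ₗ[ℂ] V)))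
    (A' : V × ℂ →ₗ[ℂ] U) (hA' : ∀ (x : V) (l : ℂ), A' (x, l) = A x + l • u₀)
    (b' : V × ℂ →ₗ[ℂ] ℂ) (hb' : ∀ (x : V) (l : ℂ), b' (x, l) = b x + l)
    (B' : V × ℂ →ₗ[ℂ] V × ℂ) (hB' : ∀ (x : V) (l : ℂ), B' (x, l) = (B x, c * l))
    (hS1 : ∀ S : Submodule ℂ V, (∀ x ∈ S, B x ∈ S) →
      S ≤ LinearMap.ker A ⊓ LinearMap.ker b → S = ⊥) :
    ∀ S : Submodule ℂ (V × ℂ), (∀ z ∈ S, B' z ∈ S) →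
      S ≤ LinearMap.ker A' ⊓ LinearMap.ker b' → S = ⊥ := by
  intro S hS hker
  have hA : A'.comp (LinearMap.inl ℂ V ℂ) = A := by ext x; simp [hA']
  have hb : b'.comp (LinearMap.inl ℂ V ℂ) = b := by ext x; simp [hb']
  have hT : S.comap (LinearMap.inl ℂ V ℂ) = ⊥ := by
    refine hS1 _ (Submodule.mapsTo_comap_inl hB' hS) ?_
    simpa only [Submodule.comap_inf, ← LinearMap.ker_comp, hA, hb] using
      Submodule.comap_mono (f := LinearMap.inl ℂ V ℂ) hker
  refine (Submodule.eq_bot_iff S).2 fun ⟨x, l⟩ hz => ?_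
  have hx : x = 0 := by
    have h := Submodule.sub_smul_fst_mem_comap_inl hB' hS hz
    rw [hT, Submodule.mem_bot] at h
    exact hBc.injective (by simpa using h)
  have hl : l = 0 := by simpa [hb', hx] using (hker hz).2
  simp [hx, hl]

/-- **Preservation of condition (S1) under supersymmetric increments between x-points.**
Let `V`, `U` be finite-dimensional complex vector spaces, `A : V → U`, `b : V → ℂ` linear,
`B` an endomorphism of `V`, `u₀ ∈ U`, and `c ∈ ℂ` with `B - c·id` invertible.  Define on
`V ⊕ ℂ` the maps `A' (x, l) = A x + l • u₀`, `b' (x, l) = b x + l`, and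
`B' (x, l) = (B x, c * l)`.  If the only `B`-invariant subspace of `V` contained in
`ker A ∩ ker b` is `0`, then the only `B'`-invariant subspace of `V ⊕ ℂ` contained in
`ker A' ∩ ker b'` is `0`. -/
theorem condition_S1_preserved
    {V U : Type*} [AddCommGroup V] [Module ℂ V] [FiniteDimensional ℂ V]
    [AddCommGroup U] [Module ℂ U] [FiniteDimensional ℂ U]
    (A : V →ₗ[ℂ] U) (b : V →ₗ[ℂ] ℂ) (B : V →ₗ[ℂ] V) (u₀ : U) (c : ℂ)
    (hBc : Function.Bijective (B - c • (LinearMap.id : V →ₗ[ℂ] V)))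
    (A' : V × ℂ →ₗ[ℂ] U) (hA' : ∀ (x : V) (l : ℂ), A' (x, l) = A x + l • u₀)
    (b' : V × ℂ →ₗ[ℂ] ℂ) (hb' : ∀ (x : V) (l : ℂ), b' (x, l) = b x + l)
    (B' : V × ℂ →ₗ[ℂ] V × ℂ) (hB' : ∀ (x : V) (l : ℂ), B' (x, l) = (B x, c * l))
    (hS1 : ∀ S : Submodule ℂ V, (∀ x ∈ S, B x ∈ S) →
      S ≤ LinearMap.ker A ⊓ LinearMap.ker b → S = ⊥) :
    ∀ S : Submodule ℂ (V × ℂ), (∀ z ∈ S, B' z ∈ S) →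
      S ≤ LinearMap.ker A' ⊓ LinearMap.ker b' → S = ⊥ :=
  condition_S1_preserved_general A b B u₀ c hBc A' hA' b' hb' B' hB' hS1
end

section
/- Key step in the proof that supersymmetric increments between x-points preserve non-emptiness of bow varieties (preservation of condition (S2)): Let W and V be finite-dimensional complex vector spaces, A : W → V and f : W → ℂ linear maps, B an endomorphism of V, v₀ ∈ V a vector, and c ∈ ℂ such that B − c·id_V is invertible. Define A' : W → V ⊕ ℂ by A'(y) = (A(y), f(y)), the endomorphism B'(x,λ) = (B(x), c·λ) of V ⊕ ℂ, and the vector v₀' = (v₀, 1) ∈ V ⊕ ℂ. If the only B-invariant subspace of V containing Im A + ℂ·v₀ is V itself, then the only B'-invariant subspace of V ⊕ ℂ containing Im A' + ℂ·v₀' is V ⊕ ℂ itself. -/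
/-!
Let `T` be a `B'`-invariant subspace containing `Im A'` and `(v₀, 1)`, and let
`T₀ = {x | (x, 0) ∈ T}`, a `B`-invariant subspace of `V`. Subtracting multiples of `(v₀, 1)`
puts `A y - f y • v₀` and `(B - c) v₀` into `T₀`; hence `(B - c)⁻¹ T₀` is `B`-invariant and
contains `Im A` and `v₀`, so it is all of `V` by (S2). As `B - c` is surjective, `T₀ = V`,
and together with `(v₀, 1)` this gives `T = V × ℂ`.
-/

namespace Submodule

variable {R V : Type*} [CommRing R] [AddCommGroup V] [Module R V]

theorem sub_smul_id_mem {T : Submodule R V} {B : Module.End R V} (hT : ∀ x ∈ T, B x ∈ T)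
    (c : R) : ∀ x ∈ T, (B - c • (LinearMap.id : V →ₗ[R] V)) x ∈ T := fun x hx =>
  T.sub_mem (hT x hx) (T.smul_mem c hx)

theorem comap_invariant_of_commute {T : Submodule R V} {B D : Module.End R V}
    (hT : ∀ x ∈ T, B x ∈ T) (hBD : Commute B D) : ∀ x ∈ T.comap D, B x ∈ T.comap D := by
  intro x hx
  rw [mem_comap, ← Module.End.mul_apply, ← hBD.eq]
  exact hT _ hx

theorem apply_mem_of_sub_smul_mem {T : Submodule R V} {D : Module.End R V}
    (hT : ∀ x ∈ T, D x ∈ T) {v x : V} (hv : D v ∈ T) {a : R} (hx : x - a • v ∈ T) :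
    D x ∈ T := by
  simpa using T.add_mem (hT _ hx) (T.smul_mem a hv)

theorem comap_inl_invariant {B : Module.End R V} {B' : Module.End R (V × R)} {c : R}
    (hB' : ∀ (x : V) (l : R), B' (x, l) = (B x, c * l)) {T : Submodule R (V × R)}
    (hT : ∀ z ∈ T, B' z ∈ T) :
    ∀ x ∈ T.comap (LinearMap.inl R V R), B x ∈ T.comap (LinearMap.inl R V R) := by
  intro x hx
  simpa [hB'] using hT _ hx

theorem sub_smul_mem_comap_inl {T : Submodule R (V × R)} {v₀ : V} (hv₀ : (v₀, 1) ∈ T)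
    {x : V} {l : R} (hx : (x, l) ∈ T) : x - l • v₀ ∈ T.comap (LinearMap.inl R V R) := by
  simpa using T.sub_mem hx (T.smul_mem l hv₀)

theorem eq_top_of_comap_inl_eq_top {T : Submodule R (V × R)} {v₀ : V} (hv₀ : (v₀, 1) ∈ T)
    (hT₀ : T.comap (LinearMap.inl R V R) = ⊤) : T = ⊤ := by
  have hinl : ∀ x : V, (x, 0) ∈ T := eq_top_iff'.mp hT₀
  rw [eq_top_iff]
  rintro ⟨x, l⟩ -
  simpa using T.add_mem (hinl (x - l • v₀)) (T.smul_mem l hv₀)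

end Submodule

open Submodule

theorem condition_S2_preserved_general
    {W V : Type*} [AddCommGroup W] [Module ℂ W]
    [AddCommGroup V] [Module ℂ V]
    (A : W →ₗ[ℂ] V) (f : W →ₗ[ℂ] ℂ) (B : V →ₗ[ℂ] V) (v₀ : V) (c : ℂ)
    (hBc : Function.Bijective (B - c • (LinearMap.id : V →ₗ[ℂ] V)))
    (A' : W →ₗ[ℂ] V × ℂ) (hA' : ∀ y : W, A' y = (A y, f y))
    (B' : V × ℂ →ₗ[ℂ] V × ℂ) (hB' : ∀ (x : V) (l : ℂ), B' (x, l) = (B x, c * l))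
    (hS2 : ∀ T : Submodule ℂ V, (∀ x ∈ T, B x ∈ T) →
      LinearMap.range A ≤ T → v₀ ∈ T → T = ⊤) :
    ∀ T : Submodule ℂ (V × ℂ), (∀ z ∈ T, B' z ∈ T) →
      LinearMap.range A' ≤ T → ((v₀, (1 : ℂ)) ∈ T) → T = ⊤ := by
  intro T hT hA hv₀
  set T₀ := T.comap (LinearMap.inl ℂ V ℂ)
  set D := B - c • (LinearMap.id : V →ₗ[ℂ] V)
  have hT₀ : ∀ x ∈ T₀, B x ∈ T₀ := comap_inl_invariant hB' hT
  have hBv₀ : (B v₀, c) ∈ T := by simpa [hB'] using hT _ hv₀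
  have hDv₀ : D v₀ ∈ T₀ := sub_smul_mem_comap_inl hv₀ hBv₀
  have hDA : LinearMap.range A ≤ T₀.comap D := by
    rintro _ ⟨y, rfl⟩
    exact apply_mem_of_sub_smul_mem (sub_smul_id_mem hT₀ c) hDv₀
      (sub_smul_mem_comap_inl hv₀ (hA' y ▸ hA ⟨y, rfl⟩))
  have hBD : Commute B D := (Commute.refl B).sub_right ((Commute.one_right B).smul_right c)
  have hU : T₀.comap D = ⊤ := hS2 _ (comap_invariant_of_commute hT₀ hBD) hDA hDv₀
  have hT₀top : T₀ = ⊤ := by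
    rw [← map_comap_eq_of_surjective hBc.2 T₀, hU, Submodule.map_top, LinearMap.range_eq_top.mpr hBc.2]
  exact eq_top_of_comap_inl_eq_top hv₀ hT₀top

/-- **Preservation of condition (S2) under supersymmetric increments between x-points.**
Let `W`, `V` be finite-dimensional complex vector spaces, `A : W → V`, `f : W → ℂ` linear,
`B` an endomorphism of `V`, `v₀ ∈ V`, and `c ∈ ℂ` with `B - c·id` invertible.  Define
`A' : W → V ⊕ ℂ` by `A' y = (A y, f y)`, the endomorphism `B' (x, l) = (B x, c * l)` of
`V ⊕ ℂ`, and `v₀' = (v₀, 1)`.  If the only `B`-invariant subspace of `V` containing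
`Im A + ℂ·v₀` is `V`, then the only `B'`-invariant subspace of `V ⊕ ℂ` containing
`Im A' + ℂ·v₀'` is `V ⊕ ℂ`. -/
theorem condition_S2_preserved
    {W V : Type*} [AddCommGroup W] [Module ℂ W] [FiniteDimensional ℂ W]
    [AddCommGroup V] [Module ℂ V] [FiniteDimensional ℂ V]
    (A : W →ₗ[ℂ] V) (f : W →ₗ[ℂ] ℂ) (B : V →ₗ[ℂ] V) (v₀ : V) (c : ℂ)
    (hBc : Function.Bijective (B - c • (LinearMap.id : V →ₗ[ℂ] V)))
    (A' : W →ₗ[ℂ] V × ℂ) (hA' : ∀ y : W, A' y = (A y, f y))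
    (B' : V × ℂ →ₗ[ℂ] V × ℂ) (hB' : ∀ (x : V) (l : ℂ), B' (x, l) = (B x, c * l))
    (hS2 : ∀ T : Submodule ℂ V, (∀ x ∈ T, B x ∈ T) →
      LinearMap.range A ≤ T → v₀ ∈ T → T = ⊤) :
    ∀ T : Submodule ℂ (V × ℂ), (∀ z ∈ T, B' z ∈ T) →
      LinearMap.range A' ≤ T → ((v₀, (1 : ℂ)) ∈ T) → T = ⊤ :=
  condition_S2_preserved_general A f B v₀ c hBc A' hA' B' hB' hS2
end

section
/- Stabilization of triangles (key step in the proof that increasing by one all dimensions along a wavy line preserves existence of solutions of the bow moment map equation, Theorem on supersymmetric increments, part (i)): Let (A, B⁻, B⁺, a, b) be a triangle on finite-dimensional complex vector spaces (V⁻, V⁺), i.e. it satisfies conditions (a), (S1) and (S2). Define on V⁻ ⊕ ℂ and V⁺ ⊕ ℂ the maps A'(x,λ) = (A(x), λ), B⁻'(x,λ) = (B⁻(x), 0), B⁺'(y,μ) = (B⁺(y), 0), the vector a' = (a, 0) ∈ V⁺ ⊕ ℂ, and b'(x,λ) = b(x). Then (A', B⁻', B⁺', a', b') is again a triangle on (V⁻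 ⊕ ℂ, V⁺ ⊕ ℂ): it satisfies conditions (a), (S1) and (S2). -/
/-!
Both stabilized data are block maps, so (S1) and (S2) reduce to the original conditions:
projecting a destabilizing subspace `S ⊆ V⁻ ⊕ ℂ` to `V⁻` gives one for the old triangle, and its
`ℂ`-coordinate vanishes because `A'` is the identity there; dually, the slice `T ∩ (V⁺ ⊕ 0)` of a
subspace `T ⊇ Im A' + ℂ·a'` satisfies the hypotheses of (S2), while `(0, 1) = A' (0, 1) ∈ T`
supplies the missing direction.
-/

open LinearMap

section

variable {R M N : Type*} [Ring R] [AddCommGroup M] [Module R M] [AddCommGroup N] [Module R N]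

def TriangleRelation (A : M →ₗ[R] N) (Bm : M →ₗ[R] M) (Bp : N →ₗ[R] N) (b : M →ₗ[R] R)
    (a : N) : Prop :=
  ∀ x : M, Bp (A x) - A (Bm x) + b x • a = 0

theorem TriangleRelation.stabilization {A : M →ₗ[R] N} {Bm : M →ₗ[R] M} {Bp : N →ₗ[R] N}
    {b : M →ₗ[R] R} {a : N} (ha : TriangleRelation A Bm Bp b a) :
    TriangleRelation (A.prodMap (id : R →ₗ[R] R)) (Bm.prodMap 0) (Bp.prodMap 0)
      (b ∘ₗ fst R M R) (a, 0) :=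
  fun z => Prod.ext (by simpa using ha z.1) (by simp)

end

section

variable {R M N : Type*} [Semiring R] [AddCommMonoid M] [Module R M]
  [AddCommMonoid N] [Module R N]

def TriangleS1 (A : M →ₗ[R] N) (Bm : M →ₗ[R] M) (b : M →ₗ[R] R) : Prop :=
  ∀ S : Submodule R M, (∀ x ∈ S, Bm x ∈ S) → S ≤ ker A ⊓ ker b → S = ⊥

def TriangleS2 (A : M →ₗ[R] N) (Bp : N →ₗ[R] N) (a : N) : Prop :=
  ∀ T : Submodule R N, (∀ y ∈ T, Bp y ∈ T) → range A ≤ T → a ∈ T → T = ⊤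

theorem TriangleS1.stabilization {A : M →ₗ[R] N} {Bm : M →ₗ[R] M} {b : M →ₗ[R] R}
    (hS1 : TriangleS1 A Bm b) :
    TriangleS1 (A.prodMap (id : R →ₗ[R] R)) (Bm.prodMap 0) (b ∘ₗ fst R M R) := by
  intro S hinv hle
  have hkerA {z : M × R} (hz : z ∈ S) : A z.1 = 0 ∧ z.2 = 0 :=
    Prod.ext_iff.mp (hle hz).1
  have hfst : S.map (fst R M R) = ⊥ := by
    refine hS1 _ ?_ ?_
    · rintro _ ⟨z, hz, rfl⟩
      exact ⟨_, hinv z hz, rfl⟩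
    · rintro _ ⟨z, hz, rfl⟩
      exact ⟨(hkerA hz).1, (hle hz).2⟩
  refine (Submodule.eq_bot_iff S).mpr fun z hz => Prod.ext ?_ (hkerA hz).2
  exact (Submodule.mem_bot R).mp (hfst ▸ Submodule.mem_map_of_mem hz)

theorem TriangleS2.stabilization {A : M →ₗ[R] N} {Bp : N →ₗ[R] N} {a : N}
    (hS2 : TriangleS2 A Bp a) :
    TriangleS2 (A.prodMap (id : R →ₗ[R] R)) (Bp.prodMap 0) (a, 0) := by
  intro T hinv hrange ha
  have hinl : T.comap (inl R N R) = ⊤ := by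
    refine hS2 _ (fun y hy => by simpa using hinv _ hy) ?_ ha
    rintro _ ⟨x, rfl⟩
    exact hrange ⟨(x, 0), rfl⟩
  have hunit : ((0, 1) : N × R) ∈ T := by
    simpa using hrange ⟨(0, 1), rfl⟩
  refine Submodule.eq_top_iff'.mpr fun z => ?_
  have hz : z = inl R N R z.1 + z.2 • (0, 1) := by ext <;> simp
  rw [hz]
  exact T.add_mem (Submodule.eq_top_iff'.mp hinl z.1) (T.smul_mem _ hunit)

end

theorem triangle_stabilization_general
    {Vm Vp : Type*} [AddCommGroup Vm] [Module ℂ Vm]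
    [AddCommGroup Vp] [Module ℂ Vp]
    (A : Vm →ₗ[ℂ] Vp) (Bm : Vm →ₗ[ℂ] Vm) (Bp : Vp →ₗ[ℂ] Vp)
    (b : Vm →ₗ[ℂ] ℂ) (a : Vp)
    (ha : ∀ x : Vm, Bp (A x) - A (Bm x) + b x • a = 0)
    (hS1 : ∀ S : Submodule ℂ Vm, (∀ x ∈ S, Bm x ∈ S) →
      S ≤ LinearMap.ker A ⊓ LinearMap.ker b → S = ⊥)
    (hS2 : ∀ T : Submodule ℂ Vp, (∀ y ∈ T, Bp y ∈ T) →
      LinearMap.range A ≤ T → a ∈ T → T = ⊤)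
    (A' : Vm × ℂ →ₗ[ℂ] Vp × ℂ) (hA' : ∀ (x : Vm) (l : ℂ), A' (x, l) = (A x, l))
    (Bm' : Vm × ℂ →ₗ[ℂ] Vm × ℂ) (hBm' : ∀ (x : Vm) (l : ℂ), Bm' (x, l) = (Bm x, 0))
    (Bp' : Vp × ℂ →ₗ[ℂ] Vp × ℂ) (hBp' : ∀ (y : Vp) (m : ℂ), Bp' (y, m) = (Bp y, 0))
    (b' : Vm × ℂ →ₗ[ℂ] ℂ) (hb' : ∀ (x : Vm) (l : ℂ), b' (x, l) = b x) :
    (∀ z : Vm × ℂ, Bp' (A' z) - A' (Bm' z) + b' z • ((a, 0) : Vp × ℂ) = 0) ∧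
    (∀ S : Submodule ℂ (Vm × ℂ), (∀ z ∈ S, Bm' z ∈ S) →
      S ≤ LinearMap.ker A' ⊓ LinearMap.ker b' → S = ⊥) ∧
    (∀ T : Submodule ℂ (Vp × ℂ), (∀ z ∈ T, Bp' z ∈ T) →
      LinearMap.range A' ≤ T → ((a, 0) : Vp × ℂ) ∈ T → T = ⊤) := by
  obtain rfl : A' = A.prodMap id := LinearMap.ext fun z => hA' z.1 z.2
  obtain rfl : Bm' = Bm.prodMap 0 := LinearMap.ext fun z => hBm' z.1 z.2
  obtain rfl : Bp' = Bp.prodMap 0 := LinearMap.ext fun z => hBp' z.1 z.2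
  obtain rfl : b' = b ∘ₗ fst ℂ Vm ℂ := LinearMap.ext fun z => hb' z.1 z.2
  exact ⟨TriangleRelation.stabilization ha, TriangleS1.stabilization hS1,
    TriangleS2.stabilization hS2⟩

/-- **Stabilization of triangles.**  Let `(A, B⁻, B⁺, a, b)` be a triangle on
finite-dimensional complex vector spaces `(V⁻, V⁺)`: it satisfies condition (a)
`B⁺ ∘ A - A ∘ B⁻ + (x ↦ b x • a) = 0`, condition (S1) (the only `B⁻`-invariant subspace
contained in `ker A ∩ ker b` is `0`), and condition (S2) (the only `B⁺`-invariant subspace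
containing `Im A + ℂ·a` is everything).  Define on `V⁻ ⊕ ℂ` and `V⁺ ⊕ ℂ` the maps
`A' (x, l) = (A x, l)`, `B⁻' (x, l) = (B⁻ x, 0)`, `B⁺' (y, m) = (B⁺ y, 0)`, the vector
`a' = (a, 0)`, and `b' (x, l) = b x`.  Then `(A', B⁻', B⁺', a', b')` again satisfies
conditions (a), (S1) and (S2). -/
theorem triangle_stabilization
    {Vm Vp : Type*} [AddCommGroup Vm] [Module ℂ Vm] [FiniteDimensional ℂ Vm]
    [AddCommGroup Vp] [Module ℂ Vp] [FiniteDimensional ℂ Vp]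
    (A : Vm →ₗ[ℂ] Vp) (Bm : Vm →ₗ[ℂ] Vm) (Bp : Vp →ₗ[ℂ] Vp)
    (b : Vm →ₗ[ℂ] ℂ) (a : Vp)
    (ha : ∀ x : Vm, Bp (A x) - A (Bm x) + b x • a = 0)
    (hS1 : ∀ S : Submodule ℂ Vm, (∀ x ∈ S, Bm x ∈ S) →
      S ≤ LinearMap.ker A ⊓ LinearMap.ker b → S = ⊥)
    (hS2 : ∀ T : Submodule ℂ Vp, (∀ y ∈ T, Bp y ∈ T) →
      LinearMap.range A ≤ T → a ∈ T → T = ⊤)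
    (A' : Vm × ℂ →ₗ[ℂ] Vp × ℂ) (hA' : ∀ (x : Vm) (l : ℂ), A' (x, l) = (A x, l))
    (Bm' : Vm × ℂ →ₗ[ℂ] Vm × ℂ) (hBm' : ∀ (x : Vm) (l : ℂ), Bm' (x, l) = (Bm x, 0))
    (Bp' : Vp × ℂ →ₗ[ℂ] Vp × ℂ) (hBp' : ∀ (y : Vp) (m : ℂ), Bp' (y, m) = (Bp y, 0))
    (b' : Vm × ℂ →ₗ[ℂ] ℂ) (hb' : ∀ (x : Vm) (l : ℂ), b' (x, l) = b x) :
    (∀ z : Vm × ℂ, Bp' (A' z) - A' (Bm' z) + b' z • ((a, 0) : Vp × ℂ) = 0) ∧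
    (∀ S : Submodule ℂ (Vm × ℂ), (∀ z ∈ S, Bm' z ∈ S) →
      S ≤ LinearMap.ker A' ⊓ LinearMap.ker b' → S = ⊥) ∧
    (∀ T : Submodule ℂ (Vp × ℂ), (∀ z ∈ T, Bp' z ∈ T) →
      LinearMap.range A' ≤ T → ((a, 0) : Vp × ℂ) ∈ T → T = ⊤) :=
  triangle_stabilization_general A Bm Bp b a ha hS1 hS2 A' hA' Bm' hBm' Bp' hBp' b' hb'
end

section
/- Greedy attachment of fixed D3-branes to the first arrow (key step in the proof that finite type A bow diagrams satisfying the supersymmetry inequalities are supersymmetric): Consider a separated finite type A bow diagram as above and assume s·k + v_s + u_k − v_0 ≥ 0 for every s ∈ {0,...,n} and k ∈ {0,...,w}. Define f = max{ k ∈ {0,...,w} : u_j ≥ k − j for all j ∈ {0,...,k} } (this is the maximal number of fixed D3-branes attachable to ○_1 without breaking supersymmetry; the defining set contains k = 0, so f is well defined). Then: (i) f = 0 if and only if v_0 = 0; (ii) v_1 ≥ v_0 − f; (iii) there exists j ∈ {0,...,f} with u_j = f − j. -/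
/-!
Call `k` attachable when `u j ≥ k - j` for all `j ≤ k`. The inequalities with `s = 0` make every
`u k` nonnegative, so an attachable `k < w` at which no `u j` is tight extends to `k + 1`; by
maximality of `f` some `u j` is therefore tight, `u j = f - j` (for `f = w` take `j = w`). The
inequality with `s = 1` at that `j` is exactly `v 1 ≥ v 0 - f`, and `f ≥ 1` iff `1` is attachable,
i.e. iff `v 0 = u 0 ≥ 1`.
-/

def IsAttachable (u : ℕ → ℤ) (k : ℕ) : Prop :=
  ∀ j : ℕ, j ≤ k → (k : ℤ) - j ≤ u j

theorem IsAttachable.succ {u : ℕ → ℤ} {k : ℕ} (hk : IsAttachable u k)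
    (hslack : ∀ j ≤ k, u j ≠ k - j) (hnext : 0 ≤ u (k + 1)) : IsAttachable u (k + 1) := by
  intro j hj
  rcases Nat.le_succ_iff.mp hj with hj | rfl
  · have := lt_of_le_of_ne (hk j hj) (hslack j hj).symm
    push_cast
    omega
  · simpa using hnext

theorem isAttachable_one {u : ℕ → ℤ} (h0 : 1 ≤ u 0) (h1 : 0 ≤ u 1) : IsAttachable u 1 := by
  intro j hj
  interval_cases j <;> simpa

theorem exists_tight_of_isAttachable_maximal {u : ℕ → ℤ} {w f : ℕ} (hfw : f ≤ w)
    (huw : u w = 0) (hu : ∀ k ≤ w, 0 ≤ u k) (hf : IsAttachable u f)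
    (hfmax : ∀ k ≤ w, IsAttachable u k → k ≤ f) : ∃ j ≤ f, u j = f - j := by
  rcases hfw.eq_or_lt with rfl | hlt
  · exact ⟨f, le_rfl, by simp [huw]⟩
  · by_contra! hslack
    have := hfmax (f + 1) hlt (hf.succ hslack (hu _ hlt))
    omega

theorem greedy_attachment_to_first_arrow_general
    (n w : ℕ) (hn : 1 ≤ n) (hw : 1 ≤ w)
    (v u : ℕ → ℤ) (hu0 : u 0 = v 0) (huw : u w = 0)
    (hineq : ∀ s k : ℕ, s ≤ n → k ≤ w → 0 ≤ (s : ℤ) * k + v s + u k - v 0)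
    (f : ℕ) (hfw : f ≤ w)
    (hfmem : ∀ j : ℕ, j ≤ f → (f : ℤ) - j ≤ u j)
    (hfmax : ∀ k : ℕ, k ≤ w → (∀ j : ℕ, j ≤ k → (k : ℤ) - j ≤ u j) → k ≤ f) :
    (f = 0 ↔ v 0 = 0) ∧ (v 0 - f ≤ v 1) ∧ (∃ j : ℕ, j ≤ f ∧ u j = (f : ℤ) - j) := by
  have hu : ∀ k ≤ w, 0 ≤ u k := fun k hk => by simpa using hineq 0 k n.zero_le hk
  have htight := exists_tight_of_isAttachable_maximal hfw huw hu hfmem hfmax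
  refine ⟨⟨fun hf0 => ?_, fun hv0 => ?_⟩, ?_, htight⟩
  · by_contra hv
    have h0 := hu 0 w.zero_le
    have := hfmax 1 hw (isAttachable_one (by omega) (hu 1 hw))
    omega
  · have := hfmem 0 f.zero_le
    push_cast at this
    omega
  · obtain ⟨j, hjf, hj⟩ := htight
    have := hineq 1 j hn (hjf.trans hfw)
    rw [hj] at this
    push_cast at this
    linarith

/-- **Greedy attachment of fixed D3-branes to the first arrow.**  Consider a separated
finite type A bow diagram (segment dimensions `v n = 0, ..., v 1, v 0` and
`u 0 = v 0, u 1, ..., u (w-1), u w = 0`) satisfying `s·k + v_s + u_k - v_0 ≥ 0` for all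
`0 ≤ s ≤ n`, `0 ≤ k ≤ w`.  Let `f = max { k ∈ {0,...,w} : u_j ≥ k - j for all 0 ≤ j ≤ k }`
(encoded by: `f` belongs to the set and dominates every member).  Then:
(i) `f = 0` iff `v 0 = 0`; (ii) `v 1 ≥ v 0 - f`; (iii) there is `j ≤ f` with
`u j = f - j`. -/
theorem greedy_attachment_to_first_arrow
    (n w : ℕ) (hn : 1 ≤ n) (hw : 1 ≤ w)
    (v u : ℕ → ℤ) (hvn : v n = 0) (hu0 : u 0 = v 0) (huw : u w = 0)
    (hineq : ∀ s k : ℕ, s ≤ n → k ≤ w → 0 ≤ (s : ℤ) * k + v s + u k - v 0)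
    (f : ℕ) (hfw : f ≤ w)
    (hfmem : ∀ j : ℕ, j ≤ f → (f : ℤ) - j ≤ u j)
    (hfmax : ∀ k : ℕ, k ≤ w → (∀ j : ℕ, j ≤ k → (k : ℤ) - j ≤ u j) → k ≤ f) :
    (f = 0 ↔ v 0 = 0) ∧ (v 0 - f ≤ v 1) ∧ (∃ j : ℕ, j ≤ f ∧ u j = (f : ℤ) - j) :=
  greedy_attachment_to_first_arrow_general n w hn hw v u hu0 huw hineq f hfw hfmem hfmax
end
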